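/- arXiv:1307.4385 — 10 statements merged into one kernel-verified Lean document; each statement's English description precedes it below -/
import Mathlib

section
/- For an infinite-dimensional real Banach space X, the Whitley thickness constant T_W(X) = inf{ε > 0 : there is a finite ε-net F ⊆ S_X for S_X} equals T(X) = inf{ε > 0 : there exist finitely many points x_1,…,x_n ∈ S_X with B_X ⊆ ⋃_i B(x_i, ε)}. -/
/-- The thickness constant `T(X)`: the infimum of `ε > 0` such that finitely many closed
`ε`-balls centered at unit vectors cover the closed unit ball of `X`. -/
noncomputable def thickness (X : Type*) [NormedAddCommGroup X] : ℝ :=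
  sInf {ε : ℝ | 0 < ε ∧ ∃ F : Finset X, (∀ x ∈ F, ‖x‖ = 1) ∧
    ∀ y : X, ‖y‖ ≤ 1 → ∃ x ∈ F, ‖y - x‖ ≤ ε}

/-- Whitley's thickness constant `T_W(X)`: the infimum of `ε > 0` such that there is a finite
`ε`-net consisting of unit vectors for the unit sphere of `X`. -/
noncomputable def whitleyThickness (X : Type*) [NormedAddCommGroup X] : ℝ :=
  sInf {ε : ℝ | 0 < ε ∧ ∃ F : Finset X, (∀ x ∈ F, ‖x‖ = 1) ∧
    ∀ y : X, ‖y‖ = 1 → ∃ x ∈ F, ‖y - x‖ ≤ ε}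

/-!
By Riesz's lemma, a finite set of an infinite-dimensional space leaves some unit vector at
distance almost `1`, so every finite `ε`-net of the unit sphere has `ε ≥ 1`. Such a net,
made of unit vectors, is then already an `ε`-net of the whole unit ball: writing `y = t • z`
with `‖z‖ = 1` and `t ∈ [0, 1]`, convexity of the norm gives
`‖t • z - x‖ ≤ max ‖z - x‖ ‖x‖ ≤ max ε 1 = ε`. Hence the sets defining `T_W(X)` and `T(X)`
coincide.
-/

section RCLike

variable {𝕜 E : Type*} [RCLike 𝕜] [NormedAddCommGroup E] [NormedSpace 𝕜 E]

theorem exists_norm_eq_one_forall_le_norm_sub_of_finite (hinf : ¬FiniteDimensional 𝕜 E)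
    {s : Set E} (hs : s.Finite) {r : ℝ} (hr : r < 1) :
    ∃ x : E, ‖x‖ = 1 ∧ ∀ y ∈ s, r ≤ ‖x - y‖ := by
  let V := Submodule.span 𝕜 s
  have : FiniteDimensional 𝕜 V := FiniteDimensional.span_of_finite 𝕜 hs
  have hV : ∃ x : E, x ∉ V := by
    by_contra! hV
    exact hinf (Module.Finite.equiv (LinearEquiv.ofTop V (eq_top_iff.2 fun x _ => hV x)))
  obtain ⟨x, -, hx1, hx⟩ := riesz_lemma_of_lt_one V.closed_of_finiteDimensional hV hr
  exact ⟨x, hx1, fun y hy => hx y (Submodule.subset_span hy)⟩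

theorem one_le_of_forall_norm_eq_one_exists_norm_sub_le (hinf : ¬FiniteDimensional 𝕜 E)
    {s : Set E} (hs : s.Finite) {ε : ℝ} (hnet : ∀ y : E, ‖y‖ = 1 → ∃ x ∈ s, ‖y - x‖ ≤ ε) :
    1 ≤ ε := by
  refine le_of_forall_lt_imp_le_of_dense fun r hr => ?_
  obtain ⟨y, hy1, hy⟩ := exists_norm_eq_one_forall_le_norm_sub_of_finite hinf hs hr
  obtain ⟨x, hxs, hyx⟩ := hnet y hy1
  exact (hy x hxs).trans hyx

end RCLike

section Real

variable {X : Type*} [NormedAddCommGroup X] [NormedSpace ℝ X]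

theorem exists_norm_eq_one_norm_smul_eq [Nontrivial X] (y : X) :
    ∃ z : X, ‖z‖ = 1 ∧ ‖y‖ • z = y := by
  rcases eq_or_ne y 0 with rfl | hy
  · obtain ⟨z, hz⟩ := exists_norm_eq X zero_le_one
    exact ⟨z, hz, by simp⟩
  · exact ⟨‖y‖⁻¹ • y, norm_smul_inv_norm hy, smul_inv_smul₀ (norm_ne_zero_iff.2 hy) y⟩

theorem norm_smul_sub_le_max {t : ℝ} (ht₀ : 0 ≤ t) (ht₁ : t ≤ 1) (z x : X) :
    ‖t • z - x‖ ≤ max ‖z - x‖ ‖x‖ := by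
  have hmem : t • z - x ∈ segment ℝ (z - x) (-x) :=
    ⟨t, 1 - t, ht₀, sub_nonneg.2 ht₁, by ring, by module⟩
  simpa using convexOn_norm convex_univ |>.le_on_segment (Set.mem_univ _) (Set.mem_univ _) hmem

theorem forall_norm_le_one_exists_norm_sub_le (hinf : ¬FiniteDimensional ℝ X) {F : Finset X}
    (hF : ∀ x ∈ F, ‖x‖ = 1) {ε : ℝ} (hnet : ∀ y : X, ‖y‖ = 1 → ∃ x ∈ F, ‖y - x‖ ≤ ε)
    {y : X} (hy : ‖y‖ ≤ 1) : ∃ x ∈ F, ‖y - x‖ ≤ ε := by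
  have hε : 1 ≤ ε := one_le_of_forall_norm_eq_one_exists_norm_sub_le hinf F.finite_toSet hnet
  have : Nontrivial X := by
    by_contra!
    exact hinf inferInstance
  obtain ⟨z, hz1, hyz⟩ := exists_norm_eq_one_norm_smul_eq y
  obtain ⟨x, hxF, hzx⟩ := hnet z hz1
  rw [← hyz]
  refine ⟨x, hxF, (norm_smul_sub_le_max (norm_nonneg _) hy z x).trans ?_⟩
  exact max_le hzx (hF x hxF ▸ hε)

end Real

theorem whitleyThickness_eq_thickness_general
    (X : Type*) [NormedAddCommGroup X] [NormedSpace ℝ X]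
    (hinf : ¬ FiniteDimensional ℝ X) :
    whitleyThickness X = thickness X := by
  unfold whitleyThickness thickness
  congr 1
  ext ε
  constructor
  · rintro ⟨hε, F, hF, hnet⟩
    exact ⟨hε, F, hF, fun y hy => forall_norm_le_one_exists_norm_sub_le hinf hF hnet hy⟩
  · rintro ⟨hε, F, hF, hnet⟩
    exact ⟨hε, F, hF, fun y hy => hnet y hy.le⟩

/-- for an infinite-dimensional real Banach space, `T_W(X) = T(X)`. -/
theorem whitleyThickness_eq_thickness
    (X : Type*) [NormedAddCommGroup X] [NormedSpace ℝ X] [CompleteSpace X]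
    (hinf : ¬ FiniteDimensional ℝ X) :
    whitleyThickness X = thickness X :=
  whitleyThickness_eq_thickness_general X hinf
end

section
/- For 1 ≤ p < ∞, the thickness constant of L_p[0,1] equals 2^{1/p}; that is, T(L_p[0,1]) = 2^{1/p} where T(X) = inf{ε > 0 : finitely many closed balls of radius ε centered at unit vectors cover the unit ball}. -/
open scoped ENNReal NNReal

open MeasureTheory

/-!
Cut the measure space into `n` disjoint cells `A i` of positive finite measure and let `u i` be a
unit vector supported on `A i`. A vector `y` of norm at most `1` carries `p`-th power mass at most
`1/n` on some cell, so Minkowski's inequality on that cell gives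
`‖y - u i‖ ^ p ≤ (1 + n ^ (-1/p)) ^ p + 1`; hence `T ≤ 2 ^ (1/p)`. Conversely, for finitely many
unit vectors `x₁, …, x_m` some cell carries mass at most `m/n` of every `x_j`, and then
`‖u i - x_j‖ ^ p ≥ (1 - (m/n) ^ (1/p)) ^ p + 1 - m/n` for all `j`; letting `n → ∞` gives
`T ≥ 2 ^ (1/p)`. In `[0,1]` the cells can be taken to be the dyadic intervals `(2⁻ⁱ⁻¹, 2⁻ⁱ]`.
-/

open scoped Function
open Filter Topology

section eLpNorm

variable {α ι E : Type*} [MeasurableSpace α] {μ : Measure α} [NormedAddCommGroup E] {p : ℝ≥0∞}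

lemma eLpNorm_rpow_toReal_eq_lintegral (hp0 : p ≠ 0) (hp : p ≠ ∞) (f : α → E) :
    eLpNorm f p μ ^ p.toReal = ∫⁻ x, ‖f x‖ₑ ^ p.toReal ∂μ := by
  lift p to ℝ≥0 using hp
  exact eLpNorm_nnreal_pow_eq_lintegral (by exact_mod_cast hp0)

lemma eLpNorm_restrict_rpow_add_compl (hp0 : p ≠ 0) (hp : p ≠ ∞) (f : α → E) {A : Set α}
    (hA : MeasurableSet A) :
    eLpNorm f p (μ.restrict A) ^ p.toReal + eLpNorm f p (μ.restrict Aᶜ) ^ p.toReal =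
      eLpNorm f p μ ^ p.toReal := by
  simp only [eLpNorm_rpow_toReal_eq_lintegral hp0 hp]
  exact lintegral_add_compl _ hA

lemma sum_eLpNorm_restrict_rpow_le (hp0 : p ≠ 0) (hp : p ≠ ∞) (f : α → E) {A : ι → Set α}
    (hAm : ∀ i, MeasurableSet (A i)) (hAd : Pairwise (Disjoint on A)) (s : Finset ι) :
    ∑ i ∈ s, eLpNorm f p (μ.restrict (A i)) ^ p.toReal ≤ eLpNorm f p μ ^ p.toReal := by
  simp only [eLpNorm_rpow_toReal_eq_lintegral hp0 hp]
  rw [← lintegral_biUnion_finset (hAd.set_pairwise _) (fun i _ ↦ hAm i)]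
  exact setLIntegral_le_lintegral _ _

lemma exists_forall_eLpNorm_restrict_rpow_le_div (hp0 : p ≠ 0) (hp : p ≠ ∞) {A : ℕ → Set α}
    (hAm : ∀ i, MeasurableSet (A i)) (hAd : Pairwise (Disjoint on A)) {n : ℕ} (hn : n ≠ 0)
    (F : Finset ι) (f : ι → α → E) {C : ℝ≥0∞}
    (hC : ∑ j ∈ F, eLpNorm (f j) p μ ^ p.toReal ≤ C) :
    ∃ i < n, ∀ j ∈ F, eLpNorm (f j) p (μ.restrict (A i)) ^ p.toReal ≤ C / n := by
  have htotal : ∑ i ∈ Finset.range n, ∑ j ∈ F, eLpNorm (f j) p (μ.restrict (A i)) ^ p.toReal ≤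
      ∑ _i ∈ Finset.range n, C / n := by
    rw [Finset.sum_comm, Finset.sum_const, Finset.card_range, nsmul_eq_mul,
      ENNReal.mul_div_cancel (by exact_mod_cast hn) (ENNReal.natCast_ne_top n)]
    exact (Finset.sum_le_sum fun j _ ↦ sum_eLpNorm_restrict_rpow_le hp0 hp _ hAm hAd _).trans hC
  obtain ⟨i, hi, hle⟩ := ENNReal.exists_le_of_sum_le (Finset.nonempty_range_iff.mpr hn) htotal
  exact ⟨i, Finset.mem_range.mp hi, fun j hj ↦
    (Finset.single_le_sum (fun _ _ ↦ zero_le) hj).trans hle⟩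

variable {f u : α → E} {A : Set α}

lemma eLpNorm_sub_rpow_eq (hp0 : p ≠ 0) (hp : p ≠ ∞) (hA : MeasurableSet A)
    (hu0 : u =ᵐ[μ.restrict Aᶜ] 0) :
    eLpNorm (f - u) p μ ^ p.toReal =
      eLpNorm (f - u) p (μ.restrict A) ^ p.toReal + eLpNorm f p (μ.restrict Aᶜ) ^ p.toReal := by
  have hoff : f - u =ᵐ[μ.restrict Aᶜ] f := by
    filter_upwards [hu0] with x hx
    simp [hx]
  rw [← eLpNorm_congr_ae hoff, eLpNorm_restrict_rpow_add_compl hp0 hp _ hA]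

lemma eLpNorm_sub_rpow_le (hp1 : 1 ≤ p) (hp : p ≠ ∞) (hA : MeasurableSet A)
    (hf : AEStronglyMeasurable f μ) (hu : AEStronglyMeasurable u μ)
    (hu1 : eLpNorm u p (μ.restrict A) = 1) (hu0 : u =ᵐ[μ.restrict Aᶜ] 0) :
    eLpNorm (f - u) p μ ^ p.toReal ≤
      (eLpNorm f p (μ.restrict A) + 1) ^ p.toReal + eLpNorm f p (μ.restrict Aᶜ) ^ p.toReal := by
  have hp0 : p ≠ 0 := (zero_lt_one.trans_le hp1).ne'
  rw [eLpNorm_sub_rpow_eq hp0 hp hA hu0, ← hu1]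
  gcongr
  exact eLpNorm_sub_le hf.restrict hu.restrict hp1

lemma le_eLpNorm_sub_rpow (hp1 : 1 ≤ p) (hp : p ≠ ∞) (hA : MeasurableSet A)
    (hf : AEStronglyMeasurable f μ) (hu : AEStronglyMeasurable u μ)
    (hu1 : eLpNorm u p (μ.restrict A) = 1) (hu0 : u =ᵐ[μ.restrict Aᶜ] 0) :
    (1 - eLpNorm f p (μ.restrict A)) ^ p.toReal + eLpNorm f p (μ.restrict Aᶜ) ^ p.toReal ≤
      eLpNorm (f - u) p μ ^ p.toReal := by
  have hp0 : p ≠ 0 := (zero_lt_one.trans_le hp1).ne'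
  rw [eLpNorm_sub_rpow_eq hp0 hp hA hu0]
  gcongr
  rw [tsub_le_iff_right, ← hu1]
  simpa using eLpNorm_sub_le (hf.restrict.sub hu.restrict) hf.restrict hp1

end eLpNorm

/- If `u` is a unit vector supported on `A`, `t` is the `p`-th power mass of `y` on `A` and
`q = p.toReal`, then `‖y - u‖ ≤ upperRadius q t` when `‖y‖ ≤ 1` and `lowerRadius q t ≤ ‖y - u‖`
when `‖y‖ = 1`. -/
noncomputable def upperRadius (q : ℝ) (t : ℝ≥0∞) : ℝ≥0∞ := ((t ^ q⁻¹ + 1) ^ q + 1) ^ q⁻¹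

noncomputable def lowerRadius (q : ℝ) (t : ℝ≥0∞) : ℝ≥0∞ := ((1 - t ^ q⁻¹) ^ q + (1 - t)) ^ q⁻¹

section Radius

variable {q : ℝ}

lemma upperRadius_zero (hq : 0 < q) : upperRadius q 0 = 2 ^ q⁻¹ := by
  simp [upperRadius, ENNReal.zero_rpow_of_pos (inv_pos.mpr hq), one_add_one_eq_two]

lemma lowerRadius_zero (hq : 0 < q) : lowerRadius q 0 = 2 ^ q⁻¹ := by
  simp [lowerRadius, ENNReal.zero_rpow_of_pos (inv_pos.mpr hq), one_add_one_eq_two]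

lemma continuous_upperRadius : Continuous (upperRadius q) := by
  unfold upperRadius
  fun_prop

lemma continuous_lowerRadius : Continuous (lowerRadius q) := by
  have := ENNReal.continuous_sub_left ENNReal.one_ne_top
  unfold lowerRadius
  fun_prop

lemma upperRadius_ne_top (hq : 0 < q) {t : ℝ≥0∞} (ht : t ≠ ∞) : upperRadius q t ≠ ∞ := by
  unfold upperRadius
  finiteness

lemma two_rpow_inv_eq_ofReal (hq : 0 < q) : (2 : ℝ≥0∞) ^ q⁻¹ = ENNReal.ofReal (2 ^ (1 / q)) := by
  rw [← ENNReal.ofReal_ofNat 2, ENNReal.ofReal_rpow_of_nonneg zero_le_two (inv_pos.mpr hq).le,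
    one_div]

lemma one_le_upperRadius (hq : 0 < q) (t : ℝ≥0∞) : 1 ≤ upperRadius q t :=
  ENNReal.one_le_rpow le_add_self (inv_pos.mpr hq)

end Radius

section Lp

variable {α E : Type*} [MeasurableSpace α] {μ : Measure α} [NormedAddCommGroup E] {p : ℝ≥0∞}
  [Fact (1 ≤ p)]

lemma Lp.ofReal_norm_sub_eq_eLpNorm (f g : Lp E p μ) :
    ENNReal.ofReal ‖f - g‖ = eLpNorm (⇑f - ⇑g) p μ := by
  rw [← dist_eq_norm, ← edist_dist, Lp.edist_def]

variable [NormedSpace ℝ E] [Nontrivial E]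

lemma Lp.exists_unit_supported_on (hp : p ≠ ∞) {A : Set α}
    (hA : MeasurableSet A) (hA0 : μ A ≠ 0) (hAtop : μ A ≠ ∞) :
    ∃ u : Lp E p μ, ‖u‖ = 1 ∧ eLpNorm u p (μ.restrict A) = 1 ∧ u =ᵐ[μ.restrict Aᶜ] 0 := by
  have hp0 : p ≠ 0 := (zero_lt_one.trans_le Fact.out).ne'
  have hμA : 0 < μ.real A := ENNReal.toReal_pos hA0 hAtop
  obtain ⟨c, hc⟩ := exists_norm_eq E (Real.rpow_nonneg hμA.le (-(1 / p.toReal)))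
  set u := indicatorConstLp p hA hAtop c
  have hu : ‖u‖ = 1 := by
    rw [norm_indicatorConstLp hp0 hp, hc, ← Real.rpow_add hμA, neg_add_cancel, Real.rpow_zero]
  refine ⟨u, hu, ?_, ?_⟩
  · have hu_ae : ⇑u =ᵐ[μ] A.indicator fun _ ↦ c := indicatorConstLp_coeFn
    rw [eLpNorm_congr_ae (ae_restrict_of_ae hu_ae),
      eLpNorm_restrict_eq_of_support_subset Set.support_indicator_subset,
      ← eLpNorm_congr_ae hu_ae, ← Lp.enorm_def, ← ofReal_norm, hu, ENNReal.ofReal_one]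
  · rw [EventuallyEq, ae_restrict_iff' hA.compl]
    exact indicatorConstLp_coeFn_notMem


lemma exists_unit_cover_upperRadius (hp : p ≠ ∞) {A : ℕ → Set α}
    (hAm : ∀ i, MeasurableSet (A i)) (hAd : Pairwise (Disjoint on A))
    (hA0 : ∀ i, μ (A i) ≠ 0) (hAtop : ∀ i, μ (A i) ≠ ∞) {n : ℕ} (hn : n ≠ 0) :
    ∃ F : Finset (Lp E p μ), (∀ x ∈ F, ‖x‖ = 1) ∧ ∀ y : Lp E p μ, ‖y‖ ≤ 1 →
      ∃ x ∈ F, ENNReal.ofReal ‖y - x‖ ≤ upperRadius p.toReal (n : ℝ≥0∞)⁻¹ := by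
  have hp1 : 1 ≤ p := Fact.out
  have hp0 : p ≠ 0 := (zero_lt_one.trans_le hp1).ne'
  have hq : 0 < p.toReal := ENNReal.toReal_pos hp0 hp
  classical
  choose u hu1 huA hu0 using fun i ↦
    Lp.exists_unit_supported_on (E := E) hp (hAm i) (hA0 i) (hAtop i)
  refine ⟨(Finset.range n).image u, by simpa using fun i _ ↦ hu1 i, fun y hy ↦ ?_⟩
  have hy1 : eLpNorm y p μ ^ p.toReal ≤ 1 := by
    rw [← Lp.enorm_def, ← ofReal_norm]
    exact ENNReal.rpow_le_one (ENNReal.ofReal_le_one.mpr hy) hq.le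
  obtain ⟨i, hi, hsmall⟩ := exists_forall_eLpNorm_restrict_rpow_le_div hp0 hp hAm hAd hn {y}
    (fun y : Lp E p μ ↦ ⇑y) (by simpa using hy1)
  refine ⟨u i, Finset.mem_image_of_mem u (Finset.mem_range.mpr hi), ?_⟩
  rw [Lp.ofReal_norm_sub_eq_eLpNorm, upperRadius, ENNReal.le_rpow_inv_iff hq]
  calc eLpNorm (⇑y - ⇑(u i)) p μ ^ p.toReal
      ≤ (eLpNorm y p (μ.restrict (A i)) + 1) ^ p.toReal +
          eLpNorm y p (μ.restrict (A i)ᶜ) ^ p.toReal :=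
        eLpNorm_sub_rpow_le hp1 hp (hAm i) (Lp.aestronglyMeasurable y)
          (Lp.aestronglyMeasurable _) (huA i) (hu0 i)
    _ ≤ ((n : ℝ≥0∞)⁻¹ ^ p.toReal⁻¹ + 1) ^ p.toReal + 1 := by
      gcongr
      · rw [ENNReal.le_rpow_inv_iff hq, ← one_div]
        simpa using hsmall
      · rw [← eLpNorm_restrict_rpow_add_compl hp0 hp _ (hAm i)] at hy1
        exact le_add_self.trans hy1

lemma lowerRadius_le_of_unit_cover (hp : p ≠ ∞) {A : ℕ → Set α}
    (hAm : ∀ i, MeasurableSet (A i)) (hAd : Pairwise (Disjoint on A))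
    (hA0 : ∀ i, μ (A i) ≠ 0) (hAtop : ∀ i, μ (A i) ≠ ∞) {ε : ℝ} {F : Finset (Lp E p μ)}
    (hF : ∀ x ∈ F, ‖x‖ = 1) (hcov : ∀ y : Lp E p μ, ‖y‖ ≤ 1 → ∃ x ∈ F, ‖y - x‖ ≤ ε)
    {n : ℕ} (hn : n ≠ 0) :
    lowerRadius p.toReal (F.card / n) ≤ ENNReal.ofReal ε := by
  have hp1 : 1 ≤ p := Fact.out
  have hp0 : p ≠ 0 := (zero_lt_one.trans_le hp1).ne'
  have hq : 0 < p.toReal := ENNReal.toReal_pos hp0 hp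
  have hF1 : ∀ x ∈ F, eLpNorm x p μ ^ p.toReal = 1 := fun x hx ↦ by
    rw [← Lp.enorm_def, ← ofReal_norm, hF x hx, ENNReal.ofReal_one, ENNReal.one_rpow]
  obtain ⟨i, -, hsmall⟩ := exists_forall_eLpNorm_restrict_rpow_le_div hp0 hp hAm hAd hn F
    (fun x : Lp E p μ ↦ ⇑x) (C := F.card)
    ((Finset.sum_le_card_nsmul _ _ 1 fun x hx ↦ (hF1 x hx).le).trans_eq (nsmul_one _))
  obtain ⟨u, hu1, huA, hu0⟩ :=
    Lp.exists_unit_supported_on (E := E) hp (hAm i) (hA0 i) (hAtop i)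
  obtain ⟨x, hxF, hx⟩ := hcov u hu1.le
  have hsplit := eLpNorm_restrict_rpow_add_compl (μ := μ) hp0 hp x (hAm i)
  rw [hF1 x hxF] at hsplit
  calc lowerRadius p.toReal (F.card / n) ≤ eLpNorm (⇑x - ⇑u) p μ := by
        rw [lowerRadius, ENNReal.rpow_inv_le_iff hq]
        refine le_trans ?_ (le_eLpNorm_sub_rpow hp1 hp (hAm i) (Lp.aestronglyMeasurable x)
          (Lp.aestronglyMeasurable u) huA hu0)
        gcongr
        · rw [ENNReal.le_rpow_inv_iff hq]
          exact hsmall x hxF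
        · rw [tsub_le_iff_right, ← hsplit, add_comm]
          gcongr
          exact hsmall x hxF
    _ = ENNReal.ofReal ‖x - u‖ := (Lp.ofReal_norm_sub_eq_eLpNorm x u).symm
    _ ≤ ENNReal.ofReal ε := by
      rw [norm_sub_rev]
      exact ENNReal.ofReal_le_ofReal hx

end Lp

section thickness

variable {X : Type*} [NormedAddCommGroup X]

lemma thickness_le_of_cover {ε : ℝ} (hε : 0 < ε) {F : Finset X} (hF : ∀ x ∈ F, ‖x‖ = 1)
    (hcov : ∀ y : X, ‖y‖ ≤ 1 → ∃ x ∈ F, ‖y - x‖ ≤ ε) : thickness X ≤ ε :=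
  csInf_le ⟨0, fun _ h ↦ h.1.le⟩ ⟨hε, F, hF, hcov⟩

/-- A single unit vector is a `2`-net of the unit ball, so the infimum is over a nonempty set. -/
lemma le_thickness {x₀ : X} (hx₀ : ‖x₀‖ = 1) {b : ℝ}
    (h : ∀ ε > 0, ∀ F : Finset X, (∀ x ∈ F, ‖x‖ = 1) →
      (∀ y : X, ‖y‖ ≤ 1 → ∃ x ∈ F, ‖y - x‖ ≤ ε) → b ≤ ε) :
    b ≤ thickness X := by
  refine le_csInf ⟨2, two_pos, {x₀}, by simpa using hx₀,
    fun y hy ↦ ⟨x₀, Finset.mem_singleton_self x₀, ?_⟩⟩ fun ε ⟨hε, F, hF, hcov⟩ ↦ h ε hε F hF hcov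
  linarith [norm_sub_le y x₀]

end thickness

section LpThickness

variable {α E : Type*} [MeasurableSpace α] {μ : Measure α} [NormedAddCommGroup E]
  [NormedSpace ℝ E] [Nontrivial E] {p : ℝ≥0∞} [Fact (1 ≤ p)]

lemma thickness_Lp_le_two_rpow (hp : p ≠ ∞) {A : ℕ → Set α} (hAm : ∀ i, MeasurableSet (A i))
    (hAd : Pairwise (Disjoint on A)) (hA0 : ∀ i, μ (A i) ≠ 0) (hAtop : ∀ i, μ (A i) ≠ ∞) :
    thickness (Lp E p μ) ≤ 2 ^ (1 / p.toReal) := by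
  have hq : 0 < p.toReal := ENNReal.toReal_pos (zero_lt_one.trans_le Fact.out).ne' hp
  have hle : ∀ n : ℕ, n ≠ 0 →
      thickness (Lp E p μ) ≤ (upperRadius p.toReal (n : ℝ≥0∞)⁻¹).toReal := fun n hn ↦ by
    obtain ⟨F, hF, hcov⟩ := exists_unit_cover_upperRadius (E := E) hp hAm hAd hA0 hAtop hn
    have hR := upperRadius_ne_top hq (ENNReal.inv_ne_top.mpr (Nat.cast_ne_zero.mpr hn))
    refine thickness_le_of_cover
      (ENNReal.toReal_pos (zero_lt_one.trans_le (one_le_upperRadius hq _)).ne' hR) hF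
      fun y hy ↦ ?_
    obtain ⟨x, hx, hxy⟩ := hcov y hy
    exact ⟨x, hx, (ENNReal.ofReal_le_iff_le_toReal hR).mp hxy⟩
  have hlim : Tendsto (fun n : ℕ ↦ (upperRadius p.toReal (n : ℝ≥0∞)⁻¹).toReal) atTop
      (𝓝 (2 ^ (1 / p.toReal))) := by
    have h := (ENNReal.tendsto_toReal (upperRadius_ne_top hq ENNReal.zero_ne_top)).comp
      (((continuous_upperRadius (q := p.toReal)).tendsto 0).comp
        ENNReal.tendsto_inv_nat_nhds_zero)
    rwa [upperRadius_zero hq, two_rpow_inv_eq_ofReal hq,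
      ENNReal.toReal_ofReal (by positivity)] at h
  exact ge_of_tendsto hlim ((eventually_ne_atTop 0).mono hle)

lemma two_rpow_le_thickness_Lp (hp : p ≠ ∞) {A : ℕ → Set α} (hAm : ∀ i, MeasurableSet (A i))
    (hAd : Pairwise (Disjoint on A)) (hA0 : ∀ i, μ (A i) ≠ 0) (hAtop : ∀ i, μ (A i) ≠ ∞) :
    2 ^ (1 / p.toReal) ≤ thickness (Lp E p μ) := by
  have hq : 0 < p.toReal := ENNReal.toReal_pos (zero_lt_one.trans_le Fact.out).ne' hp
  obtain ⟨x₀, hx₀, -⟩ :=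
    Lp.exists_unit_supported_on (E := E) hp (hAm 0) (hA0 0) (hAtop 0)
  refine le_thickness hx₀ fun ε hε F hF hcov ↦ ?_
  have hlim : Tendsto (fun n : ℕ ↦ lowerRadius p.toReal (F.card / n)) atTop
      (𝓝 (2 ^ p.toReal⁻¹)) := by
    have h := ENNReal.Tendsto.const_mul ENNReal.tendsto_inv_nat_nhds_zero
      (Or.inr (ENNReal.natCast_ne_top F.card))
    rw [mul_zero] at h
    rw [← lowerRadius_zero hq]
    exact (continuous_lowerRadius.tendsto 0).comp h
  have h2 : (2 : ℝ≥0∞) ^ p.toReal⁻¹ ≤ ENNReal.ofReal ε := le_of_tendsto hlim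
    ((eventually_ne_atTop 0).mono fun n hn ↦
      lowerRadius_le_of_unit_cover hp hAm hAd hA0 hAtop hF hcov hn)
  rwa [two_rpow_inv_eq_ofReal hq, ENNReal.ofReal_le_ofReal_iff hε.le] at h2

theorem thickness_Lp_eq_two_rpow (hp : p ≠ ∞) {A : ℕ → Set α} (hAm : ∀ i, MeasurableSet (A i))
    (hAd : Pairwise (Disjoint on A)) (hA0 : ∀ i, μ (A i) ≠ 0) (hAtop : ∀ i, μ (A i) ≠ ∞) :
    thickness (Lp E p μ) = 2 ^ (1 / p.toReal) :=
  (thickness_Lp_le_two_rpow hp hAm hAd hA0 hAtop).antisymm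
    (two_rpow_le_thickness_Lp hp hAm hAd hA0 hAtop)

end LpThickness

/-- `T(L_p[0,1]) = 2^{1/p}` for `1 ≤ p < ∞`. -/
theorem thickness_Lp_unitInterval
    (p : ℝ≥0∞) [Fact (1 ≤ p)] (hp : p ≠ ⊤) :
    thickness (Lp ℝ p (volume.restrict (Set.Icc (0:ℝ) 1))) = 2 ^ (1 / p.toReal) := by
  set A : ℕ → Set ℝ := fun i ↦ Set.Ioc ((2 : ℝ)⁻¹ ^ (i + 1)) ((2 : ℝ)⁻¹ ^ i)
  have hanti : Antitone fun i : ℕ ↦ (2 : ℝ)⁻¹ ^ i :=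
    fun _ _ h ↦ pow_le_pow_of_le_one (by norm_num) (by norm_num) h
  have hμA : ∀ i, volume.restrict (Set.Icc (0 : ℝ) 1) (A i) =
      ENNReal.ofReal ((2 : ℝ)⁻¹ ^ i - (2 : ℝ)⁻¹ ^ (i + 1)) := fun i ↦ by
    rw [Measure.restrict_apply measurableSet_Ioc, Set.inter_eq_left.mpr, Real.volume_Ioc]
    exact Set.Ioc_subset_Icc_self.trans
      (Set.Icc_subset_Icc (by positivity) (pow_le_one₀ (by norm_num) (by norm_num)))
  refine thickness_Lp_eq_two_rpow hp (A := A) (fun _ ↦ measurableSet_Ioc)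
    hanti.pairwise_disjoint_on_Ioc_succ (fun i ↦ ?_)
    (fun i ↦ hμA i ▸ ENNReal.ofReal_ne_top)
  rw [hμA, ne_eq, ENNReal.ofReal_eq_zero, not_le, sub_pos]
  exact pow_lt_pow_right_of_lt_one₀ (by norm_num) (by norm_num) i.lt_succ_self
end

section
/- For 1 ≤ p < ∞ and any finite family f_1,…,f_n of norm-one functions in L_p[0,1] and any ε ∈ (0,1), there exists f ∈ S_{L_p[0,1]} with ‖f − f_i‖^p > 1 − ε^p + (1−ε)^p for every i. Consequently T(L_p[0,1]) ≥ 2^{1/p}. -/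
/-!
Given unit vectors `f₁, …, fₙ` of `L_p`, the integrals of `|fᵢ|^p` are uniformly absolutely
continuous, so there is a set `A` of small positive measure on which every `fᵢ` has `L_p`-norm
`aᵢ < ε`. For the normalized indicator `g` of `A`, the triangle inequality on `A` and the
identity `g - fᵢ = -fᵢ` off `A` give
`‖g - fᵢ‖^p ≥ (1 - aᵢ)^p + (1 - aᵢ^p) > (1 - ε)^p + 1 - ε^p`.
As `ε → 0` the right side tends to `2`, so no finite set of unit vectors is a `c`-net of the
unit ball for `c < 2^{1/p}`.
-/

open scoped ENNReal NNReal

open MeasureTheory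

open Set Filter Topology

theorem le_thickness_of_forall_exists_far {X : Type*} [NormedAddCommGroup X] {c : ℝ}
    (hX : ∃ x : X, ‖x‖ = 1)
    (hfar : ∀ F : Finset X, (∀ x ∈ F, ‖x‖ = 1) → ∀ c' < c, ∃ y : X, ‖y‖ ≤ 1 ∧
      ∀ x ∈ F, c' < ‖y - x‖) :
    c ≤ thickness X := by
  obtain ⟨x₀, hx₀⟩ := hX
  refine le_csInf ⟨2, two_pos, {x₀}, by simpa using hx₀, fun y hy => ⟨x₀, by simp, ?_⟩⟩ ?_
  · calc ‖y - x₀‖ ≤ ‖y‖ + ‖x₀‖ := norm_sub_le y x₀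
      _ ≤ 2 := by linarith
  · rintro ε ⟨-, F, hF, hcover⟩
    by_contra! hε
    obtain ⟨y, hy, hfar⟩ := hfar F hF ε hε
    obtain ⟨x, hxF, hxy⟩ := hcover y hy
    exact (hfar x hxF).not_ge hxy

theorem tendsto_one_sub_rpow_add_one_sub_rpow_rpow_inv {q : ℝ} (hq : 0 < q) :
    Tendsto (fun t : ℝ => (1 - t ^ q + (1 - t) ^ q) ^ (1 / q)) (𝓝[>] 0) (𝓝 (2 ^ (1 / q))) := by
  have hcont : ContinuousAt (fun t : ℝ => (1 - t ^ q + (1 - t) ^ q) ^ (1 / q)) 0 := by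
    refine ContinuousAt.rpow_const ?_ (Or.inr (by positivity))
    refine (continuousAt_const.sub ?_).add ?_
    · exact Real.continuousAt_rpow_const 0 q (Or.inr hq.le)
    · exact (Real.continuousAt_rpow_const _ q (Or.inl (by norm_num))).comp
        (continuousAt_const.sub continuousAt_id)
  have h0 : (1 - (0 : ℝ) ^ q + (1 - 0) ^ q) = 2 := by
    rw [Real.zero_rpow hq.ne', sub_zero, Real.one_rpow]; norm_num
  simpa only [h0] using hcont.tendsto.mono_left nhdsWithin_le_nhds

namespace MeasureTheory

variable {α E : Type*} {m : MeasurableSpace α} {μ : Measure α} [NormedAddCommGroup E]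
  {p : ℝ≥0∞} {s : Set α}

theorem eLpNorm_rpow_eq_restrict_add_restrict_compl (hp0 : p ≠ 0) (hp : p ≠ ⊤)
    (hs : MeasurableSet s) (f : α → E) :
    eLpNorm f p μ ^ p.toReal =
      eLpNorm f p (μ.restrict s) ^ p.toReal + eLpNorm f p (μ.restrict sᶜ) ^ p.toReal := by
  have hq : p.toReal ≠ 0 := (ENNReal.toReal_pos hp0 hp).ne'
  simp only [eLpNorm_eq_lintegral_rpow_enorm_toReal hp0 hp, ← ENNReal.rpow_mul,
    one_div_mul_cancel hq, ENNReal.rpow_one]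
  exact (lintegral_add_compl _ hs).symm

theorem eLpNorm_restrict_eq_of_ae_notMem_eq_zero (hs : MeasurableSet s) {g : α → E}
    (hgs : ∀ᵐ x ∂μ, x ∉ s → g x = 0) : eLpNorm g p (μ.restrict s) = eLpNorm g p μ := by
  rw [← eLpNorm_indicator_eq_eLpNorm_restrict hs]
  refine eLpNorm_congr_ae (hgs.mono fun x hx => ?_)
  by_cases hxs : x ∈ s
  · exact indicator_of_mem hxs g
  · rw [indicator_of_notMem hxs, hx hxs]

theorem one_sub_rpow_add_one_sub_rpow_le_eLpNorm_sub_rpow [Fact (1 ≤ p)] (hp : p ≠ ⊤)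
    (hs : MeasurableSet s) {f g : α → E} (hf : AEStronglyMeasurable f μ)
    (hg : AEStronglyMeasurable g μ) (hf1 : eLpNorm f p μ = 1) (hg1 : eLpNorm g p μ = 1)
    (hgs : ∀ᵐ x ∂μ, x ∉ s → g x = 0) :
    (1 - eLpNorm f p (μ.restrict s)) ^ p.toReal + (1 - eLpNorm f p (μ.restrict s) ^ p.toReal)
      ≤ eLpNorm (g - f) p μ ^ p.toReal := by
  have hp1 : 1 ≤ p := Fact.out
  have hp0 : p ≠ 0 := (zero_lt_one.trans_le hp1).ne'
  set a := eLpNorm f p (μ.restrict s)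
  have ha1 : a ≤ 1 := hf1 ▸ eLpNorm_mono_measure f Measure.restrict_le_self
  have h_on : 1 - a ≤ eLpNorm (g - f) p (μ.restrict s) := by
    have : 1 ≤ eLpNorm (g - f) p (μ.restrict s) + a := by
      calc (1 : ℝ≥0∞) = eLpNorm g p (μ.restrict s) := by
            rw [eLpNorm_restrict_eq_of_ae_notMem_eq_zero hs hgs, hg1]
        _ = eLpNorm (g - f + f) p (μ.restrict s) := by rw [sub_add_cancel]
        _ ≤ _ := eLpNorm_add_le (hg.sub hf).restrict hf.restrict hp1
    exact tsub_le_iff_right.mpr this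
  have h_off : eLpNorm (g - f) p (μ.restrict sᶜ) = eLpNorm f p (μ.restrict sᶜ) := by
    rw [← eLpNorm_neg f]
    refine eLpNorm_congr_ae ((ae_restrict_iff' hs.compl).2 (hgs.mono fun x hx hxs => ?_))
    simp [hx hxs]
  have h_mass : eLpNorm f p (μ.restrict sᶜ) ^ p.toReal = 1 - a ^ p.toReal := by
    have := eLpNorm_rpow_eq_restrict_add_restrict_compl (μ := μ) hp0 hp hs f
    rw [hf1, ENNReal.one_rpow] at this
    refine ENNReal.eq_sub_of_add_eq ?_ ((add_comm _ _).trans this.symm)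
    exact ENNReal.rpow_ne_top_of_nonneg ENNReal.toReal_nonneg
      (ne_top_of_le_ne_top ENNReal.one_ne_top ha1)
  rw [eLpNorm_rpow_eq_restrict_add_restrict_compl hp0 hp hs (g - f), h_off, h_mass]
  gcongr

theorem Lp.one_sub_rpow_add_one_sub_rpow_lt_norm_sub_rpow [Fact (1 ≤ p)] (hp : p ≠ ⊤)
    (hs : MeasurableSet s) {f g : Lp E p μ} (hf1 : ‖f‖ = 1) (hg1 : ‖g‖ = 1)
    (hgs : ∀ᵐ x ∂μ, x ∉ s → g x = 0) {ε : ℝ} (hε : ε ≤ 1)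
    (hfs : eLpNorm f p (μ.restrict s) < ENNReal.ofReal ε) :
    1 - ε ^ p.toReal + (1 - ε) ^ p.toReal < ‖g - f‖ ^ p.toReal := by
  have hq : 0 < p.toReal := (ENNReal.toReal_pos_iff_ne_top p).2 hp
  have h_unit {h : Lp E p μ} (h1 : ‖h‖ = 1) : eLpNorm h p μ = 1 := by
    rw [← ENNReal.ofReal_toReal (Lp.eLpNorm_ne_top h), ← Lp.norm_def, h1, ENNReal.ofReal_one]
  set a := eLpNorm f p (μ.restrict s)
  have ha1 : a ≤ 1 := h_unit hf1 ▸ eLpNorm_mono_measure f Measure.restrict_le_self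
  have hbound := one_sub_rpow_add_one_sub_rpow_le_eLpNorm_sub_rpow hp hs
    (Lp.aestronglyMeasurable f) (Lp.aestronglyMeasurable g) (h_unit hf1) (h_unit hg1) hgs
  rw [← eLpNorm_congr_ae (Lp.coeFn_sub g f)] at hbound
  replace hbound := ENNReal.toReal_mono
    (ENNReal.rpow_ne_top_of_nonneg hq.le (Lp.eLpNorm_ne_top _)) hbound
  rw [ENNReal.toReal_add (by simp [hq.le]) (by simp), ← ENNReal.toReal_rpow,
    ENNReal.toReal_sub_of_le ha1 ENNReal.one_ne_top, ENNReal.toReal_sub_of_le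
      (ENNReal.rpow_le_one ha1 hq.le) ENNReal.one_ne_top, ← ENNReal.toReal_rpow,
    ← ENNReal.toReal_rpow, ← Lp.norm_def, ENNReal.toReal_one] at hbound
  have ht : a.toReal < ε := ENNReal.toReal_lt_of_lt_ofReal hfs
  have : a.toReal ^ p.toReal < ε ^ p.toReal := Real.rpow_lt_rpow ENNReal.toReal_nonneg ht hq
  have : (1 - ε) ^ p.toReal ≤ (1 - a.toReal) ^ p.toReal := by gcongr
  linarith

theorem Lp.exists_norm_eq_one_ae_notMem_eq_zero (hp0 : p ≠ 0) (hp : p ≠ ⊤)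
    (hs : MeasurableSet s) (hs0 : μ s ≠ 0) (hsfin : μ s ≠ ⊤) :
    ∃ g : Lp ℝ p μ, ‖g‖ = 1 ∧ ∀ᵐ x ∂μ, x ∉ s → g x = 0 := by
  have hμs : 0 < μ.real s := ENNReal.toReal_pos hs0 hsfin
  refine ⟨indicatorConstLp p hs hsfin (μ.real s ^ (-(1 / p.toReal))), ?_,
    indicatorConstLp_coeFn_notMem⟩
  rw [norm_indicatorConstLp hp0 hp, Real.norm_of_nonneg (by positivity), ← Real.rpow_add hμs,
    neg_add_cancel, Real.rpow_zero]

theorem Lp.exists_norm_eq_one_forall_lt_norm_sub_rpow [Fact (1 ≤ p)] (hp : p ≠ ⊤)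
    (hμ : ∀ δ : ℝ≥0∞, 0 < δ → ∃ s, MeasurableSet s ∧ μ s ≠ 0 ∧ μ s ≤ δ)
    {ι : Type*} [Finite ι] (f : ι → Lp ℝ p μ) (hf : ∀ i, ‖f i‖ = 1) {ε : ℝ}
    (hε : ε ∈ Ioo (0 : ℝ) 1) :
    ∃ g : Lp ℝ p μ, ‖g‖ = 1 ∧
      ∀ i, 1 - ε ^ p.toReal + (1 - ε) ^ p.toReal < ‖g - f i‖ ^ p.toReal := by
  obtain ⟨δ, hδ, hsmall⟩ :=
    unifIntegrable_finite Fact.out hp (fun i => Lp.memLp (f i)) (half_pos hε.1)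
  obtain ⟨s, hs, hs0, hsδ⟩ := hμ (ENNReal.ofReal δ) (ENNReal.ofReal_pos.2 hδ)
  obtain ⟨g, hg1, hgs⟩ :=
    Lp.exists_norm_eq_one_ae_notMem_eq_zero
      (zero_lt_one.trans_le Fact.out).ne' hp hs hs0 (ne_top_of_le_ne_top (by simp) hsδ)
  refine ⟨g, hg1, fun i => ?_⟩
  refine Lp.one_sub_rpow_add_one_sub_rpow_lt_norm_sub_rpow hp hs (hf i) hg1 hgs hε.2.le ?_
  calc eLpNorm (f i) p (μ.restrict s) = eLpNorm (s.indicator (f i)) p μ :=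
        (eLpNorm_indicator_eq_eLpNorm_restrict hs).symm
    _ ≤ ENNReal.ofReal (ε / 2) := hsmall i s hs hsδ
    _ < ENNReal.ofReal ε := (ENNReal.ofReal_lt_ofReal_iff hε.1).2 (half_lt_self hε.1)

theorem Lp.two_rpow_inv_le_thickness [Fact (1 ≤ p)] (hp : p ≠ ⊤)
    (hμ : ∀ δ : ℝ≥0∞, 0 < δ → ∃ s, MeasurableSet s ∧ μ s ≠ 0 ∧ μ s ≤ δ) :
    2 ^ (1 / p.toReal) ≤ thickness (Lp ℝ p μ) := by
  have hq : 0 < p.toReal := (ENNReal.toReal_pos_iff_ne_top p).2 hp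
  apply le_thickness_of_forall_exists_far
  · obtain ⟨s, hs, hs0, hs1⟩ := hμ 1 one_pos
    obtain ⟨g, hg1, -⟩ := exists_norm_eq_one_ae_notMem_eq_zero
      (zero_lt_one.trans_le Fact.out).ne' hp hs hs0
      (ne_top_of_le_ne_top ENNReal.one_ne_top hs1)
    exact ⟨g, hg1⟩
  · intro F hF c hc
    obtain ⟨t, hct, ht⟩ := (((tendsto_one_sub_rpow_add_one_sub_rpow_rpow_inv hq).eventually
      (lt_mem_nhds hc)).and (Ioo_mem_nhdsGT one_pos)).exists
    obtain ⟨g, hg1, hg⟩ := exists_norm_eq_one_forall_lt_norm_sub_rpow hp hμ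
      (fun x : F => (x : Lp ℝ p μ)) (fun x => hF x x.2) ht
    refine ⟨g, hg1.le, fun x hx => hct.trans ?_⟩
    have : t ^ p.toReal ≤ 1 := Real.rpow_le_one ht.1.le ht.2.le hq.le
    have : 0 ≤ (1 - t) ^ p.toReal := Real.rpow_nonneg (by linarith [ht.2]) _
    rw [one_div, Real.rpow_inv_lt_iff_of_pos (by linarith) (norm_nonneg _) hq]
    exact hg ⟨x, hx⟩

end MeasureTheory

theorem exists_measurableSet_ne_zero_le_volume_restrict_Icc (δ : ℝ≥0∞) (hδ : 0 < δ) :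
    ∃ s, MeasurableSet s ∧ volume.restrict (Icc (0 : ℝ) 1) s ≠ 0 ∧
      volume.restrict (Icc (0 : ℝ) 1) s ≤ δ := by
  set r := (min 1 δ).toReal
  have hr1 : r ≤ 1 := ENNReal.toReal_le_of_le_ofReal zero_le_one (by simp)
  have hvol : volume.restrict (Icc (0 : ℝ) 1) (Icc 0 r) = min 1 δ := by
    rw [Measure.restrict_apply measurableSet_Icc,
      inter_eq_self_of_subset_left (Icc_subset_Icc_right hr1), Real.volume_Icc, sub_zero,
      ENNReal.ofReal_toReal (by simp)]
  exact ⟨Icc 0 r, measurableSet_Icc, by simp [hvol, hδ.ne'], hvol ▸ min_le_right 1 δ⟩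

/-- lower-bound construction in `L_p[0,1]`, `1 ≤ p < ∞`: given finitely many
norm-one functions and `ε ∈ (0,1)`, some unit vector is far from all of them; consequently
`T(L_p[0,1]) ≥ 2^{1/p}`. -/
theorem exists_far_unit_vector_Lp_and_thickness_lower_bound
    (p : ℝ≥0∞) [Fact (1 ≤ p)] (hp : p ≠ ⊤)
    (n : ℕ) (f : Fin n → Lp ℝ p (volume.restrict (Set.Icc (0:ℝ) 1)))
    (hf : ∀ i, ‖f i‖ = 1) (ε : ℝ) (hε : ε ∈ Set.Ioo (0:ℝ) 1) :
    (∃ g : Lp ℝ p (volume.restrict (Set.Icc (0:ℝ) 1)), ‖g‖ = 1 ∧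
      ∀ i, 1 - ε ^ p.toReal + (1 - ε) ^ p.toReal < ‖g - f i‖ ^ p.toReal) ∧
    2 ^ (1 / p.toReal) ≤ thickness (Lp ℝ p (volume.restrict (Set.Icc (0:ℝ) 1))) :=
  ⟨Lp.exists_norm_eq_one_forall_lt_norm_sub_rpow hp
      exists_measurableSet_ne_zero_le_volume_restrict_Icc f hf hε,
    Lp.two_rpow_inv_le_thickness hp exists_measurableSet_ne_zero_le_volume_restrict_Icc⟩
end

section
/- For 1 ≤ p ≤ 2 and any two norm-one elements f, f_0 of L_p[0,1], one has min{‖f + f_0‖, ‖f − f_0‖} ≤ 2^{1/p}. Consequently T(L_p[0,1]) ≤ 2^{1/p} for 1 ≤ p ≤ 2. -/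
/-
Pointwise, for `1 ≤ r ≤ 2`, `|x + y|^r + |x - y|^r ≤ 2 (|x|^r + |y|^r)`: write `|z|^r = (|z|^2)^(r/2)`,
use concavity of `t ↦ t^(r/2)`, the parallelogram law, and subadditivity of `t ↦ t^(r/2)`.
Integrating gives `‖f + g‖_p^p + ‖f - g‖_p^p ≤ 2 (‖f‖_p^p + ‖g‖_p^p) ≤ 4` for `f, g` in the unit ball,
so the smaller of `‖f + g‖_p`, `‖f - g‖_p` is at most `2^(1/p)`. For the thickness, the two unit
vectors `±1` then form a `2^(1/p)`-net of the unit ball.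
-/

open scoped ENNReal NNReal

open MeasureTheory

theorem norm_add_rpow_add_norm_sub_rpow_le {E : Type*} [NormedAddCommGroup E]
    [InnerProductSpace ℝ E] {r : ℝ} (hr1 : 1 ≤ r) (hr2 : r ≤ 2) (x y : E) :
    ‖x + y‖ ^ r + ‖x - y‖ ^ r ≤ 2 * (‖x‖ ^ r + ‖y‖ ^ r) := by
  set s := r / 2 with hs
  have hs0 : 0 ≤ s := by positivity
  have hs1 : s ≤ 1 := by linarith
  have hsq (z : E) : ‖z‖ ^ r = (‖z‖ ^ 2) ^ s := by
    rw [← Real.rpow_natCast_mul (norm_nonneg z), hs]; ring_nf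
  have hpar : ‖x‖ ^ 2 + ‖y‖ ^ 2 = 1 / 2 * ‖x + y‖ ^ 2 + 1 / 2 * ‖x - y‖ ^ 2 := by
    linarith [show ‖x + y‖ ^ 2 + ‖x - y‖ ^ 2 = 2 * (‖x‖ ^ 2 + ‖y‖ ^ 2) by
      simpa only [sq] using parallelogram_law_with_norm ℝ x y]
  have hmid := (Real.concaveOn_rpow hs0 hs1).2 (sq_nonneg ‖x + y‖) (sq_nonneg ‖x - y‖)
    (by norm_num : (0 : ℝ) ≤ 1 / 2) (by norm_num : (0 : ℝ) ≤ 1 / 2) (by norm_num)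
  simp only [smul_eq_mul, ← hpar] at hmid
  calc ‖x + y‖ ^ r + ‖x - y‖ ^ r = (‖x + y‖ ^ 2) ^ s + (‖x - y‖ ^ 2) ^ s := by rw [hsq, hsq]
    _ ≤ 2 * (‖x‖ ^ 2 + ‖y‖ ^ 2) ^ s := by linarith
    _ ≤ 2 * ((‖x‖ ^ 2) ^ s + (‖y‖ ^ 2) ^ s) := by
        gcongr; exact Real.rpow_add_le_add_rpow (sq_nonneg _) (sq_nonneg _) hs0 hs1
    _ = 2 * (‖x‖ ^ r + ‖y‖ ^ r) := by rw [hsq, hsq]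

theorem enorm_add_rpow_add_enorm_sub_rpow_le {E : Type*} [NormedAddCommGroup E]
    [InnerProductSpace ℝ E] {r : ℝ} (hr1 : 1 ≤ r) (hr2 : r ≤ 2) (x y : E) :
    ‖x + y‖ₑ ^ r + ‖x - y‖ₑ ^ r ≤ 2 * (‖x‖ₑ ^ r + ‖y‖ₑ ^ r) := by
  have hr0 : 0 ≤ r := by linarith
  simp only [← ofReal_norm, ENNReal.ofReal_rpow_of_nonneg (norm_nonneg _) hr0]
  rw [← ENNReal.ofReal_add (by positivity) (by positivity),
    ← ENNReal.ofReal_add (by positivity) (by positivity), ← ENNReal.ofReal_ofNat 2,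
    ← ENNReal.ofReal_mul zero_le_two]
  exact ENNReal.ofReal_le_ofReal (norm_add_rpow_add_norm_sub_rpow_le hr1 hr2 x y)

theorem eLpNorm_add_rpow_add_eLpNorm_sub_rpow_le {α E : Type*} [MeasurableSpace α]
    {μ : Measure α} [NormedAddCommGroup E] [InnerProductSpace ℝ E] {p : ℝ≥0∞} (hp1 : 1 ≤ p)
    (hp2 : p ≤ 2) {f g : α → E} (hf : AEStronglyMeasurable f μ)
    (hg : AEStronglyMeasurable g μ) :
    eLpNorm (f + g) p μ ^ p.toReal + eLpNorm (f - g) p μ ^ p.toReal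
      ≤ 2 * (eLpNorm f p μ ^ p.toReal + eLpNorm g p μ ^ p.toReal) := by
  have hp0 : p ≠ 0 := (zero_lt_one.trans_le hp1).ne'
  have hpt : p ≠ ∞ := ne_top_of_le_ne_top ENNReal.ofNat_ne_top hp2
  have hr1 : 1 ≤ p.toReal := by simpa using ENNReal.toReal_mono hpt hp1
  have hr2 : p.toReal ≤ 2 := by simpa using ENNReal.toReal_mono ENNReal.ofNat_ne_top hp2
  simp only [eLpNorm_eq_eLpNorm' hp0 hpt,
    ← lintegral_rpow_enorm_eq_rpow_eLpNorm' (ENNReal.toReal_pos hp0 hpt)]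
  calc ∫⁻ a, ‖(f + g) a‖ₑ ^ p.toReal ∂μ + ∫⁻ a, ‖(f - g) a‖ₑ ^ p.toReal ∂μ
      = ∫⁻ a, (‖f a + g a‖ₑ ^ p.toReal + ‖f a - g a‖ₑ ^ p.toReal) ∂μ :=
        (lintegral_add_left' ((hf.add hg).enorm.pow_const _) _).symm
    _ ≤ ∫⁻ a, 2 * (‖f a‖ₑ ^ p.toReal + ‖g a‖ₑ ^ p.toReal) ∂μ :=
        lintegral_mono fun a => enorm_add_rpow_add_enorm_sub_rpow_le hr1 hr2 (f a) (g a)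
    _ = 2 * (∫⁻ a, ‖f a‖ₑ ^ p.toReal ∂μ + ∫⁻ a, ‖g a‖ₑ ^ p.toReal ∂μ) := by
        rw [lintegral_const_mul' _ _ ENNReal.ofNat_ne_top,
          lintegral_add_left' (hf.enorm.pow_const _)]

theorem Lp.norm_add_rpow_add_norm_sub_rpow_le {α E : Type*} [MeasurableSpace α]
    {μ : Measure α} [NormedAddCommGroup E] [InnerProductSpace ℝ E] {p : ℝ≥0∞} [Fact (1 ≤ p)]
    (hp2 : p ≤ 2) (f g : Lp E p μ) :
    ‖f + g‖ ^ p.toReal + ‖f - g‖ ^ p.toReal ≤ 2 * (‖f‖ ^ p.toReal + ‖g‖ ^ p.toReal) := by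
  have key := eLpNorm_add_rpow_add_eLpNorm_sub_rpow_le (μ := μ) Fact.out hp2
    (Lp.aestronglyMeasurable f) (Lp.aestronglyMeasurable g)
  rw [← eLpNorm_congr_ae (Lp.coeFn_add f g), ← eLpNorm_congr_ae (Lp.coeFn_sub f g)] at key
  have hfin (h : Lp E p μ) : eLpNorm h p μ ^ p.toReal ≠ ∞ :=
    ENNReal.rpow_ne_top_of_nonneg ENNReal.toReal_nonneg (Lp.eLpNorm_ne_top h)
  have := ENNReal.toReal_mono (ENNReal.mul_ne_top ENNReal.ofNat_ne_top
    (ENNReal.add_ne_top.2 ⟨hfin f, hfin g⟩)) key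
  simpa only [ENNReal.toReal_add (hfin _) (hfin _), ENNReal.toReal_mul, ← ENNReal.toReal_rpow,
    ← Lp.norm_def, ENNReal.toReal_ofNat] using this

theorem min_le_rpow_inv_of_rpow_add_rpow_le {a b c r : ℝ} (ha : 0 ≤ a) (hb : 0 ≤ b)
    (hr : 0 < r) (h : a ^ r + b ^ r ≤ 2 * c) : min a b ≤ c ^ r⁻¹ := by
  have hmin : min a b ^ r ≤ c := by
    have := Real.rpow_le_rpow (le_min ha hb) (min_le_left a b) hr.le
    have := Real.rpow_le_rpow (le_min ha hb) (min_le_right a b) hr.le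
    linarith
  have hc : 0 ≤ c := by linarith [Real.rpow_nonneg ha r, Real.rpow_nonneg hb r]
  exact (Real.le_rpow_inv_iff_of_pos (le_min ha hb) hc hr).2 hmin

theorem Lp.min_norm_add_norm_sub_le {α E : Type*} [MeasurableSpace α] {μ : Measure α}
    [NormedAddCommGroup E] [InnerProductSpace ℝ E] {p : ℝ≥0∞} [Fact (1 ≤ p)] (hp2 : p ≤ 2)
    {f g : Lp E p μ} (hf : ‖f‖ ≤ 1) (hg : ‖g‖ ≤ 1) :
    min ‖f + g‖ ‖f - g‖ ≤ 2 ^ (1 / p.toReal) := by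
  have hr : 0 < p.toReal :=
    ENNReal.toReal_pos (zero_lt_one.trans_le Fact.out).ne' (ne_top_of_le_ne_top (by simp) hp2)
  have hf' := Real.rpow_le_one (norm_nonneg f) hf hr.le
  have hg' := Real.rpow_le_one (norm_nonneg g) hg hr.le
  rw [one_div]
  refine min_le_rpow_inv_of_rpow_add_rpow_le (norm_nonneg _) (norm_nonneg _) hr ?_
  linarith [Lp.norm_add_rpow_add_norm_sub_rpow_le hp2 f g]

theorem thickness_le_of_forall_min_norm_add_norm_sub_le {X : Type*} [NormedAddCommGroup X]
    {e : X} (he : ‖e‖ = 1) {ε : ℝ} (hε : 0 < ε)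
    (h : ∀ y : X, ‖y‖ ≤ 1 → min ‖y + e‖ ‖y - e‖ ≤ ε) : thickness X ≤ ε := by
  classical
  refine csInf_le ⟨0, fun _ hδ => hδ.1.le⟩ ⟨hε, {e, -e}, ?_, fun y hy => ?_⟩
  · simp [he]
  · rcases min_le_iff.1 (h y hy) with hle | hle
    · exact ⟨-e, by simp, by rwa [sub_neg_eq_add]⟩
    · exact ⟨e, by simp, hle⟩

/-- for `1 ≤ p ≤ 2` and norm-one `f, f₀ ∈ L_p[0,1]`,
`min {‖f+f₀‖, ‖f−f₀‖} ≤ 2^{1/p}`; consequently `T(L_p[0,1]) ≤ 2^{1/p}`. -/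
theorem min_norm_add_sub_le_and_thickness_Lp_le
    (p : ℝ≥0∞) [Fact (1 ≤ p)] (hp2 : p ≤ 2) :
    (∀ f f₀ : Lp ℝ p (volume.restrict (Set.Icc (0:ℝ) 1)), ‖f‖ = 1 → ‖f₀‖ = 1 →
      min ‖f + f₀‖ ‖f - f₀‖ ≤ 2 ^ (1 / p.toReal)) ∧
    thickness (Lp ℝ p (volume.restrict (Set.Icc (0:ℝ) 1))) ≤ 2 ^ (1 / p.toReal) := by
  refine ⟨fun f f₀ hf hf₀ => Lp.min_norm_add_norm_sub_le hp2 hf.le hf₀.le, ?_⟩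
  have hone : ‖Lp.const p (volume.restrict (Set.Icc (0:ℝ) 1)) (1 : ℝ)‖ = 1 := by
    rw [Lp.norm_const' _ _ _ (zero_lt_one.trans_le Fact.out).ne'
      (ne_top_of_le_ne_top (by simp) hp2)]
    simp [Measure.real]
  exact thickness_le_of_forall_min_norm_add_norm_sub_le hone (by positivity)
    fun y hy => Lp.min_norm_add_norm_sub_le hp2 hy hone.le
end

section
/- For 1 ≤ p ≤ ∞ and Banach spaces X_1,…,X_N, the thickness constant of the ℓ_p-direct sum satisfies T(X_1 ⊕_p ⋯ ⊕_p X_N) ≤ max{T(X_n) : 1 ≤ n ≤ N}. -/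
open scoped ENNReal NNReal

/-! Given `ε > max T(X_n)`, choose unit nets `F_n` of radius `ε' < ε` in the factors
and a fine net `G` of the unit sphere of the finite-dimensional space `ℓ_p^N(ℝ)`. A vector `y`
of the unit ball of the sum has "profile" `a = (‖y_n‖)_n`; approximating `a` by `b ∈ G` and each
`y_n / ‖y_n‖` by `x_n ∈ F_n`, the unit vector `(b_n x_n)_n` is within
`ε' ‖a‖ + ‖a - b‖ ≤ ε' ‖a‖ + (1 - ‖a‖) + δ` of `y`, which is at most `ε' + δ` because `ε' ≥ 1`
(every centre lies at distance `1` from `0`). -/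

section UnitNet

variable {X : Type*} [NormedAddCommGroup X]

def IsUnitNet (F : Finset X) (ε : ℝ) : Prop :=
  (∀ x ∈ F, ‖x‖ = 1) ∧ ∀ y : X, ‖y‖ ≤ 1 → ∃ x ∈ F, ‖y - x‖ ≤ ε

theorem IsUnitNet.mono {F : Finset X} {ε ε' : ℝ} (hF : IsUnitNet F ε) (hε : ε ≤ ε') :
    IsUnitNet F ε' :=
  ⟨hF.1, fun y hy => (hF.2 y hy).imp fun _ hx => ⟨hx.1, hx.2.trans hε⟩⟩

theorem IsUnitNet.one_le {F : Finset X} {ε : ℝ} (hF : IsUnitNet F ε) : 1 ≤ ε := by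
  obtain ⟨x, hxF, hx⟩ := hF.2 0 (by simp)
  simpa [hF.1 x hxF] using hx

def unitNetRadii (X : Type*) [NormedAddCommGroup X] : Set ℝ :=
  {ε | 0 < ε ∧ ∃ F : Finset X, IsUnitNet F ε}

theorem thickness_eq_sInf_unitNetRadii : thickness X = sInf (unitNetRadii X) := rfl

theorem thickness_le_of_isUnitNet {F : Finset X} {ε : ℝ} (hε : 0 < ε) (hF : IsUnitNet F ε) :
    thickness X ≤ ε :=
  csInf_le ⟨0, fun _ h => h.1.le⟩ ⟨hε, F, hF⟩

theorem thickness_of_subsingleton [Subsingleton X] : thickness X = 0 := by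
  have : unitNetRadii X = ∅ := by
    refine Set.eq_empty_of_forall_notMem fun ε ⟨_, F, hF⟩ => ?_
    obtain ⟨x, hxF, -⟩ := hF.2 0 (by simp)
    simpa [Subsingleton.elim x 0] using hF.1 x hxF
  rw [thickness_eq_sInf_unitNetRadii, this, Real.sInf_empty]

variable [NormedSpace ℝ X]

theorem exists_isUnitNet_two [Nontrivial X] : ∃ F : Finset X, IsUnitNet F 2 := by
  obtain ⟨e, he⟩ := exists_norm_eq X zero_le_one
  refine ⟨{e}, by simp [he], fun y hy => ⟨e, Finset.mem_singleton_self e, ?_⟩⟩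
  linarith [norm_sub_le y e]

theorem unitNetRadii_nonempty [Nontrivial X] : (unitNetRadii X).Nonempty :=
  ⟨2, two_pos, exists_isUnitNet_two⟩

theorem one_le_thickness [Nontrivial X] : 1 ≤ thickness X :=
  le_csInf unitNetRadii_nonempty fun _ ⟨_, _, hF⟩ => IsUnitNet.one_le hF

theorem exists_isUnitNet_of_thickness_lt [Nontrivial X] {ε : ℝ} (h : thickness X < ε) :
    ∃ F : Finset X, IsUnitNet F ε := by
  obtain ⟨ε₀, ⟨-, F, hF⟩, hε₀⟩ := exists_lt_of_csInf_lt unitNetRadii_nonempty h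
  exact ⟨F, hF.mono hε₀.le⟩

theorem IsUnitNet.exists_norm_sub_norm_smul_le {F : Finset X} {ε : ℝ} (hF : IsUnitNet F ε)
    (y : X) : ∃ x ∈ F, ‖y - ‖y‖ • x‖ ≤ ε * ‖y‖ := by
  rcases eq_or_ne y 0 with rfl | hy
  · obtain ⟨x, hxF, -⟩ := hF.2 0 (by simp)
    exact ⟨x, hxF, by simp⟩
  have hy' : 0 < ‖y‖ := norm_pos_iff.2 hy
  obtain ⟨x, hxF, hx⟩ := hF.2 (‖y‖⁻¹ • y) (by simp [norm_smul, hy])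
  refine ⟨x, hxF, ?_⟩
  calc ‖y - ‖y‖ • x‖ = ‖‖y‖ • (‖y‖⁻¹ • y - x)‖ := by rw [smul_sub, smul_inv_smul₀ hy'.ne']
    _ = ‖y‖ * ‖‖y‖⁻¹ • y - x‖ := by rw [norm_smul, norm_norm]
    _ ≤ ε * ‖y‖ := by rw [mul_comm ε]; exact mul_le_mul_of_nonneg_left hx hy'.le

end UnitNet

section RadialNet

variable {E : Type*} [NormedAddCommGroup E] [NormedSpace ℝ E]

theorem exists_norm_eq_one_norm_sub_eq [Nontrivial E] {a : E} (ha : ‖a‖ ≤ 1) :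
    ∃ u : E, ‖u‖ = 1 ∧ ‖a - u‖ = 1 - ‖a‖ := by
  rcases eq_or_ne a 0 with rfl | ha0
  · obtain ⟨u, hu⟩ := exists_norm_eq E zero_le_one
    exact ⟨u, hu, by simp [hu]⟩
  have hna : 0 < ‖a‖ := norm_pos_iff.2 ha0
  have hu : ‖‖a‖⁻¹ • a‖ = 1 := by simp [norm_smul, ha0]
  refine ⟨‖a‖⁻¹ • a, hu, ?_⟩
  have : a - ‖a‖⁻¹ • a = (‖a‖ - 1) • ‖a‖⁻¹ • a := by
    rw [sub_smul, one_smul, smul_smul, mul_inv_cancel₀ hna.ne', one_smul]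
  rw [this, norm_smul, hu, mul_one, Real.norm_eq_abs,
    abs_of_nonpos (by linarith), neg_sub]

theorem exists_finset_norm_eq_one_norm_sub_le [FiniteDimensional ℝ E] [Nontrivial E] {δ : ℝ}
    (hδ : 0 < δ) : ∃ G : Finset E, (∀ b ∈ G, ‖b‖ = 1) ∧
      ∀ a : E, ‖a‖ ≤ 1 → ∃ b ∈ G, ‖a - b‖ ≤ 1 - ‖a‖ + δ := by
  obtain ⟨t, hts, ht, hcover⟩ := (isCompact_sphere (0 : E) 1).finite_cover_balls hδ
  refine ⟨ht.toFinset, fun b hb => by simpa using hts (ht.mem_toFinset.1 hb), fun a ha => ?_⟩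
  obtain ⟨u, hu, hau⟩ := exists_norm_eq_one_norm_sub_eq ha
  obtain ⟨b, hbt, hub⟩ := Set.mem_iUnion₂.1 (hcover (by simpa using hu))
  refine ⟨b, ht.mem_toFinset.2 hbt, ?_⟩
  rw [Metric.mem_ball, dist_eq_norm] at hub
  linarith [norm_sub_le_norm_sub_add_norm_sub a u b]

end RadialNet

section PiLp

variable {p : ℝ≥0∞} [Fact (1 ≤ p)] {ι : Type*} [Fintype ι]

theorem PiLp.norm_le_norm_of_norm_apply_le {α β : ι → Type*} [∀ i, NormedAddCommGroup (α i)]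
    [∀ i, NormedAddCommGroup (β i)] (f : PiLp p α) (g : PiLp p β) (h : ∀ i, ‖f i‖ ≤ ‖g i‖) :
    ‖f‖ ≤ ‖g‖ := by
  rcases eq_or_ne p ∞ with rfl | hp
  · rw [PiLp.norm_eq_ciSup, PiLp.norm_eq_ciSup]
    rcases isEmpty_or_nonempty ι with hι | hι
    · simp
    · exact ciSup_le fun i =>
        (h i).trans (le_ciSup (f := fun i => ‖g i‖) (Set.finite_range _).bddAbove i)
  · have hpt : 0 < p.toReal :=
      ENNReal.toReal_pos (zero_lt_one.trans_le (Fact.out : 1 ≤ p)).ne' hp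
    rw [PiLp.norm_eq_sum hpt, PiLp.norm_eq_sum hpt]
    gcongr with i
    exact h i

theorem PiLp.norm_eq_norm_of_norm_apply_eq {α β : ι → Type*} [∀ i, NormedAddCommGroup (α i)]
    [∀ i, NormedAddCommGroup (β i)] (f : PiLp p α) (g : PiLp p β) (h : ∀ i, ‖f i‖ = ‖g i‖) :
    ‖f‖ = ‖g‖ :=
  le_antisymm (norm_le_norm_of_norm_apply_le f g fun i => (h i).le)
    (norm_le_norm_of_norm_apply_le g f fun i => (h i).ge)

variable {X : ι → Type*} [∀ i, NormedAddCommGroup (X i)]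

theorem PiLp.norm_toLp_norm (f : PiLp p X) :
    ‖WithLp.toLp p (fun i => ‖f i‖ : ι → ℝ)‖ = ‖f‖ :=
  norm_eq_norm_of_norm_apply_eq _ f fun i => norm_norm (f i)

variable [∀ i, NormedSpace ℝ (X i)]

theorem PiLp.norm_toLp_smul_of_norm_eq_one (b : PiLp p fun _ : ι => ℝ) {x : ∀ i, X i}
    (hx : ∀ i, ‖x i‖ = 1) : ‖WithLp.toLp p (fun i => b i • x i)‖ = ‖b‖ :=
  norm_eq_norm_of_norm_apply_eq _ b fun i => by simp [norm_smul, hx i]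

/-- Replacing the radial part `a = (‖y i‖)_i` of `y` by `b` costs `‖a - b‖`; replacing each
direction `y i / ‖y i‖` by `x i` costs `ε ‖y‖`. -/
theorem PiLp.norm_sub_toLp_smul_le (y : PiLp p X) (b : PiLp p fun _ : ι => ℝ) {x : ∀ i, X i}
    (hx : ∀ i, ‖x i‖ = 1) {ε : ℝ} (hε : 0 ≤ ε) (hxy : ∀ i, ‖y i - ‖y i‖ • x i‖ ≤ ε * ‖y i‖) :
    ‖y - WithLp.toLp p (fun i => b i • x i)‖ ≤
      ε * ‖y‖ + ‖WithLp.toLp p (fun i => ‖y i‖ : ι → ℝ) - b‖ := by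
  set a : PiLp p fun _ : ι => ℝ := WithLp.toLp p fun i => ‖y i‖
  set d : PiLp p fun _ : ι => ℝ := WithLp.toLp p fun i => ‖(a - b) i‖
  have hcomponent : ∀ i, ‖(y - WithLp.toLp p (fun i => b i • x i)) i‖ ≤ ‖(ε • a + d) i‖ := by
    intro i
    have hsplit : y i - b i • x i = (y i - ‖y i‖ • x i) + (‖y i‖ - b i) • x i := by
      rw [sub_smul]; abel
    calc ‖(y - WithLp.toLp p (fun i => b i • x i)) i‖
        = ‖(y i - ‖y i‖ • x i) + (‖y i‖ - b i) • x i‖ := by simp [hsplit]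
      _ ≤ ε * ‖y i‖ + ‖(a - b) i‖ := by
        refine (norm_add_le _ _).trans (add_le_add (hxy i) ?_)
        simp [a, norm_smul, hx i]
      _ ≤ ‖(ε • a + d) i‖ := by
        simpa [a, d] using le_abs_self (ε * ‖y i‖ + |‖y i‖ - b i|)
  calc ‖y - WithLp.toLp p (fun i => b i • x i)‖ ≤ ‖ε • a + d‖ :=
        norm_le_norm_of_norm_apply_le _ _ hcomponent
    _ ≤ ε * ‖a‖ + ‖d‖ := by
        refine (norm_add_le _ _).trans ?_
        rw [norm_smul, Real.norm_of_nonneg hε]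
    _ = ε * ‖y‖ + ‖a - b‖ := by rw [norm_toLp_norm, norm_toLp_norm]

theorem exists_isUnitNet_piLp {F : ∀ i, Finset (X i)} {ε δ : ℝ}
    (hF : ∀ i, IsUnitNet (F i) ε) (hε : 1 ≤ ε) {G : Finset (PiLp p fun _ : ι => ℝ)}
    (hG : ∀ b ∈ G, ‖b‖ = 1) (hGa : ∀ a, ‖a‖ ≤ 1 → ∃ b ∈ G, ‖a - b‖ ≤ 1 - ‖a‖ + δ) :
    ∃ Z : Finset (PiLp p X), IsUnitNet Z (ε + δ) := by
  classical
  refine ⟨(G ×ˢ Fintype.piFinset F).image fun q => WithLp.toLp p fun i => q.1 i • q.2 i,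
    ?_, fun y hy => ?_⟩
  · simp only [Finset.mem_image, Finset.mem_product, Fintype.mem_piFinset]
    rintro _ ⟨⟨b, x⟩, ⟨hb, hx⟩, rfl⟩
    rw [PiLp.norm_toLp_smul_of_norm_eq_one b fun i => (hF i).1 _ (hx i), hG b hb]
  choose x hxF hxy using fun i => (hF i).exists_norm_sub_norm_smul_le (y i)
  have hx : ∀ i, ‖x i‖ = 1 := fun i => (hF i).1 _ (hxF i)
  set a : PiLp p fun _ : ι => ℝ := WithLp.toLp p fun i => ‖y i‖
  have ha : ‖a‖ = ‖y‖ := PiLp.norm_toLp_norm y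
  obtain ⟨b, hbG, hab⟩ := hGa a (ha ▸ hy)
  refine ⟨_, Finset.mem_image.2
    ⟨(b, x), Finset.mem_product.2 ⟨hbG, Fintype.mem_piFinset.2 hxF⟩, rfl⟩, ?_⟩
  have hclose := PiLp.norm_sub_toLp_smul_le y b hx (zero_le_one.trans hε) hxy
  rw [ha] at hab
  nlinarith [norm_nonneg y]

theorem thickness_piLp_le_iSup [∀ i, Nontrivial (X i)] :
    thickness (PiLp p X) ≤ ⨆ i, thickness (X i) := by
  rcases isEmpty_or_nonempty ι with hι | hι
  · rw [thickness_of_subsingleton, Real.iSup_of_isEmpty]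
  set M := ⨆ i, thickness (X i)
  have hM : ∀ i, thickness (X i) ≤ M := le_ciSup (Set.finite_range _).bddAbove
  refine le_of_forall_gt_imp_ge_of_dense fun ε hε => ?_
  obtain ⟨δ, hδ, rfl⟩ : ∃ δ > 0, ε = M + δ + δ := ⟨(ε - M) / 2, by linarith, by ring⟩
  choose F hF using fun i =>
    exists_isUnitNet_of_thickness_lt ((hM i).trans_lt (lt_add_of_pos_right M hδ))
  obtain ⟨G, hG, hGa⟩ := exists_finset_norm_eq_one_norm_sub_le (E := PiLp p fun _ : ι => ℝ) hδ
  have h1 : 1 ≤ M + δ := by linarith [one_le_thickness.trans (hM (Classical.arbitrary ι))]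
  obtain ⟨Z, hZ⟩ := exists_isUnitNet_piLp hF h1 hG hGa
  exact thickness_le_of_isUnitNet (by linarith) hZ

end PiLp

theorem thickness_piLp_le_sup_general
    (p : ℝ≥0∞) [Fact (1 ≤ p)] (N : ℕ)
    (X : Fin N → Type*) [∀ n, NormedAddCommGroup (X n)] [∀ n, NormedSpace ℝ (X n)]
    (hinf : ∀ n, ¬ FiniteDimensional ℝ (X n)) :
    thickness (PiLp p X) ≤ ⨆ n, thickness (X n) := by
  have : ∀ n, Nontrivial (X n) := fun n =>
    not_subsingleton_iff_nontrivial.1 fun _ => hinf n inferInstance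
  exact thickness_piLp_le_iSup

/-- the thickness of a finite `ℓ_p`-sum is at most the maximum of the
thicknesses of the factors, `1 ≤ p ≤ ∞`. -/
theorem thickness_piLp_le_sup
    (p : ℝ≥0∞) [Fact (1 ≤ p)] (N : ℕ) (hN : 0 < N)
    (X : Fin N → Type*) [∀ n, NormedAddCommGroup (X n)] [∀ n, NormedSpace ℝ (X n)]
    [∀ n, CompleteSpace (X n)] (hinf : ∀ n, ¬ FiniteDimensional ℝ (X n)) :
    thickness (PiLp p X) ≤ ⨆ n, thickness (X n) :=
  thickness_piLp_le_sup_general p N X hinf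
end

section
/- For 1 ≤ p < ∞ and any sequence (X_n) of Banach spaces, T(ℓ_p(X_n)) ≤ ( inf_n T(X_n)^p + 1 )^{1/p}. -/
open scoped ENNReal NNReal

/-!
A unit cover of the unit ball of one summand `E i` transports along the isometry `lp.single p i`
to a unit cover of the unit ball of `ℓ_p(E)`: for `‖y‖ ≤ 1` the `i`-th coordinate of
`y - lp.single p i x` contributes `‖y i - x‖ ^ p ≤ ε ^ p` and all other coordinates together at
most `‖y‖ ^ p ≤ 1`. Optimising over `i` and `ε`, continuity of `t ↦ (t ^ p + 1) ^ (1 / p)` gives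
the bound at the infimum.
-/

theorem Module.nontrivial_of_not_finite {R M : Type*} [Semiring R] [AddCommMonoid M] [Module R M]
    (h : ¬ Module.Finite R M) : Nontrivial M :=
  not_subsingleton_iff_nontrivial.mp fun _ => h inferInstance

def thicknessSet (X : Type*) [NormedAddCommGroup X] : Set ℝ :=
  {ε : ℝ | 0 < ε ∧ ∃ F : Finset X, (∀ x ∈ F, ‖x‖ = 1) ∧
    ∀ y : X, ‖y‖ ≤ 1 → ∃ x ∈ F, ‖y - x‖ ≤ ε}

section thicknessSet

variable {X : Type*} [NormedAddCommGroup X]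

theorem thickness_eq_sInf_thicknessSet : thickness X = sInf (thicknessSet X) := rfl

theorem thickness_le_of_mem_thicknessSet {ε : ℝ} (hε : ε ∈ thicknessSet X) :
    thickness X ≤ ε :=
  thickness_eq_sInf_thicknessSet (X := X) ▸ csInf_le ⟨0, fun _ h => h.1.le⟩ hε

theorem two_mem_thicknessSet [NormedSpace ℝ X] [Nontrivial X] : (2 : ℝ) ∈ thicknessSet X := by
  obtain ⟨x, hx⟩ := exists_norm_eq X zero_le_one
  refine ⟨two_pos, {x}, by simpa using hx, fun y hy => ⟨x, Finset.mem_singleton_self x, ?_⟩⟩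
  calc ‖y - x‖ ≤ ‖y‖ + ‖x‖ := norm_sub_le y x
    _ ≤ 2 := by rw [hx]; linarith

theorem exists_mem_thicknessSet_lt [NormedSpace ℝ X] [Nontrivial X] {r : ℝ}
    (h : thickness X < r) : ∃ ε ∈ thicknessSet X, ε < r :=
  exists_lt_of_csInf_lt ⟨2, two_mem_thicknessSet⟩ (thickness_eq_sInf_thicknessSet (X := X) ▸ h)

end thicknessSet

namespace lp

variable {α : Type*} [DecidableEq α] {E : α → Type*} [∀ i, NormedAddCommGroup (E i)]
  {p : ℝ≥0∞}

theorem norm_sub_single_rpow (hp : 0 < p.toReal) (f : lp E p) (i : α) (x : E i) :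
    ‖f - lp.single p i x‖ ^ p.toReal =
      ‖f‖ ^ p.toReal + (‖f i - x‖ ^ p.toReal - ‖f i‖ ^ p.toReal) := by
  refine (hasSum_norm hp _).unique ?_
  convert (hasSum_norm hp f).add (hasSum_ite_eq i (‖f i - x‖ ^ p.toReal - ‖f i‖ ^ p.toReal))
    using 1
  funext j
  by_cases hj : j = i
  · subst hj; simp
  · simp [hj]

theorem rpow_add_one_rpow_inv_mem_thicknessSet [Fact (1 ≤ p)] (hp : p ≠ ⊤) (i : α) {ε : ℝ}
    (hε : ε ∈ thicknessSet (E i)) :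
    (ε ^ p.toReal + 1) ^ (1 / p.toReal) ∈ thicknessSet (lp E p) := by
  classical
  obtain ⟨hε0, F, hF, hcover⟩ := hε
  have hp0 : 0 < p := zero_lt_one.trans_le Fact.out
  have hpr : 0 < p.toReal := ENNReal.toReal_pos hp0.ne' hp
  refine ⟨by positivity, F.image (lp.single p i), ?_, fun y hy => ?_⟩
  · simpa [lp.norm_single hp0] using hF
  obtain ⟨x, hxF, hx⟩ := hcover (y i) ((lp.norm_apply_le_norm hp0.ne' y i).trans hy)
  refine ⟨lp.single p i x, Finset.mem_image_of_mem _ hxF, ?_⟩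
  rw [one_div, Real.le_rpow_inv_iff_of_pos (norm_nonneg _) (by positivity) hpr,
    norm_sub_single_rpow hpr]
  have hy' : ‖y‖ ^ p.toReal ≤ 1 := Real.rpow_le_one (norm_nonneg _) hy hpr.le
  have hx' : ‖y i - x‖ ^ p.toReal ≤ ε ^ p.toReal := by gcongr
  have hyi : 0 ≤ ‖y i‖ ^ p.toReal := by positivity
  linarith

end lp

theorem thickness_lp_le_general
    (p : ℝ≥0∞) [Fact (1 ≤ p)] (hp : p ≠ ⊤)
    (E : ℕ → Type*) [∀ n, NormedAddCommGroup (E n)] [∀ n, NormedSpace ℝ (E n)]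
    (hinf : ∀ n, ¬ FiniteDimensional ℝ (E n)) :
    thickness (lp E p) ≤ ((⨅ n, thickness (E n)) ^ p.toReal + 1) ^ (1 / p.toReal) := by
  have hg : Continuous fun t : ℝ => (t ^ p.toReal + 1) ^ (1 / p.toReal) := by
    fun_prop (disch := positivity)
  refine ge_of_tendsto (hg.continuousAt.tendsto.mono_left nhdsWithin_le_nhds)
    (eventually_nhdsWithin_of_forall (s := Set.Ioi (⨅ n, thickness (E n))) fun t ht => ?_)
  obtain ⟨n, hn⟩ := exists_lt_of_ciInf_lt (Set.mem_Ioi.mp ht)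
  have := Module.nontrivial_of_not_finite (hinf n)
  obtain ⟨ε, hε, hεt⟩ := exists_mem_thicknessSet_lt hn
  calc thickness (lp E p) ≤ (ε ^ p.toReal + 1) ^ (1 / p.toReal) :=
        thickness_le_of_mem_thicknessSet (lp.rpow_add_one_rpow_inv_mem_thicknessSet hp n hε)
    _ ≤ (t ^ p.toReal + 1) ^ (1 / p.toReal) := by
        have hε0 : 0 ≤ ε := hε.1.le
        gcongr

/-- `T(ℓ_p(X_n)) ≤ (inf_n T(X_n)^p + 1)^{1/p}` for `1 ≤ p < ∞`. -/
theorem thickness_lp_le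
    (p : ℝ≥0∞) [Fact (1 ≤ p)] (hp : p ≠ ⊤)
    (E : ℕ → Type*) [∀ n, NormedAddCommGroup (E n)] [∀ n, NormedSpace ℝ (E n)]
    [∀ n, CompleteSpace (E n)] (hinf : ∀ n, ¬ FiniteDimensional ℝ (E n)) :
    thickness (lp E p) ≤ ((⨅ n, thickness (E n)) ^ p.toReal + 1) ^ (1 / p.toReal) :=
  thickness_lp_le_general p hp E hinf
end

section
/- For any sequence (X_n) of infinite-dimensional Banach spaces, the thickness constant of the ℓ_∞-direct sum satisfies T(ℓ_∞(X_n)) = inf_n T(X_n). -/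
open scoped ENNReal NNReal

/-!
A cover of the unit ball by balls centred on the unit sphere has radius at least `1`, since it
must reach `0`, while every coordinate of a point of the unit ball of `ℓ_∞(X_n)` has norm at most
`1`. So an `ε`-cover of the ball of `X_n`, placed in the `n`-th coordinate, is an `ε`-cover of the
ball of `ℓ_∞(X_n)`. Conversely, every centre `z` of an `ε`-cover of the ball of `ℓ_∞(X_n)` has a
coordinate `z_n` of norm nearly `1`, hence within `δ` of its normalization. If no `X_n` had an
`(ε + δ)`-cover, each `X_n` would contain a point of its ball farther than `ε + δ` from all these
normalized coordinates, and the sequence of these points would be farther than `ε` from every `z`.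
-/

def HasSphereCenteredCover (X : Type*) [NormedAddCommGroup X] (ε : ℝ) : Prop :=
  ∃ F : Finset X, (∀ x ∈ F, ‖x‖ = 1) ∧ ∀ y : X, ‖y‖ ≤ 1 → ∃ x ∈ F, ‖y - x‖ ≤ ε

section NormedAddCommGroup

variable {X : Type*} [NormedAddCommGroup X] {ε : ℝ}

theorem HasSphereCenteredCover.one_le (h : HasSphereCenteredCover X ε) : 1 ≤ ε := by
  obtain ⟨F, hF, hcover⟩ := h
  obtain ⟨x, hx, hx0⟩ := hcover 0 (by simp)
  simpa [hF x hx] using hx0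

theorem hasSphereCenteredCover_two {x : X} (hx : ‖x‖ = 1) : HasSphereCenteredCover X 2 := by
  refine ⟨{x}, by simpa using hx, fun y hy => ⟨x, Finset.mem_singleton_self x, ?_⟩⟩
  calc ‖y - x‖ ≤ ‖y‖ + ‖x‖ := norm_sub_le y x
    _ ≤ 2 := by linarith

theorem thickness_nonneg (X : Type*) [NormedAddCommGroup X] : 0 ≤ thickness X :=
  Real.sInf_nonneg fun _ hε => hε.1.le

theorem thickness_le (h : HasSphereCenteredCover X ε) : thickness X ≤ ε :=
  csInf_le ⟨0, fun _ hε => hε.1.le⟩ ⟨by linarith [h.one_le], h⟩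

theorem le_thickness_s12 [NormedSpace ℝ X] [Nontrivial X] {a : ℝ}
    (h : ∀ ε, HasSphereCenteredCover X ε → a ≤ ε) : a ≤ thickness X := by
  obtain ⟨x, hx⟩ := exists_norm_eq X zero_le_one
  exact le_csInf ⟨2, two_pos, hasSphereCenteredCover_two hx⟩ fun ε hε => h ε hε.2

theorem norm_sub_inv_norm_smul_self [NormedSpace ℝ X] {x : X} (hx : x ≠ 0) :
    ‖x - ‖x‖⁻¹ • x‖ = |‖x‖ - 1| := by
  have hx' : ‖x‖ ≠ 0 := norm_ne_zero_iff.mpr hx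
  calc ‖x - ‖x‖⁻¹ • x‖ = ‖(1 - ‖x‖⁻¹) • x‖ := by rw [sub_smul, one_smul]
    _ = |(1 - ‖x‖⁻¹) * ‖x‖| := by rw [norm_smul, Real.norm_eq_abs, abs_mul, abs_norm]
    _ = |‖x‖ - 1| := by rw [sub_mul, one_mul, inv_mul_cancel₀ hx']

end NormedAddCommGroup

section lp

variable {ι : Type*} {E : ι → Type*} [∀ i, NormedAddCommGroup (E i)] {ε : ℝ}

instance lp.instNontrivial [Nonempty ι] [∀ i, Nontrivial (E i)] (p : ℝ≥0∞) :
    Nontrivial (lp E p) := by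
  classical
  obtain ⟨i⟩ := ‹Nonempty ι›
  obtain ⟨x, hx⟩ := exists_ne (0 : E i)
  refine ⟨lp.single p i x, 0, fun h => hx ?_⟩
  simpa using congr_arg (fun f : lp E p => f i) h

theorem HasSphereCenteredCover.lp_single {i : ι}
    (h : HasSphereCenteredCover (E i) ε) : HasSphereCenteredCover (lp E ∞) ε := by
  classical
  obtain ⟨F, hF, hcover⟩ := h
  refine ⟨F.image (lp.single ∞ i), ?_, fun y hy => ?_⟩
  · simp only [Finset.mem_image, forall_exists_index, and_imp, forall_apply_eq_imp_iff₂]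
    intro x hx
    rw [lp.norm_single ENNReal.zero_lt_top, hF x hx]
  have hyi : ‖y i‖ ≤ 1 := (lp.norm_apply_le_norm ENNReal.top_ne_zero y i).trans hy
  obtain ⟨x, hx, hyx⟩ := hcover (y i) hyi
  refine ⟨lp.single ∞ i x, Finset.mem_image_of_mem _ hx, ?_⟩
  have hε : 1 ≤ ε := HasSphereCenteredCover.one_le ⟨F, hF, hcover⟩
  refine lp.norm_le_of_forall_le (zero_le_one.trans hε) fun j => ?_
  rw [lp.coeFn_sub, Pi.sub_apply]
  rcases eq_or_ne j i with rfl | hji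
  · rwa [lp.single_apply_self]
  · rw [lp.single_apply_ne _ _ _ hji, sub_zero]
    exact ((lp.norm_apply_le_norm ENNReal.top_ne_zero y j).trans hy).trans hε

theorem HasSphereCenteredCover.exists_of_lp [Nonempty ι] [∀ i, NormedSpace ℝ (E i)]
    (h : HasSphereCenteredCover (lp E ∞) ε) {δ : ℝ} (hδ : 0 < δ) :
    ∃ i, HasSphereCenteredCover (E i) (ε + δ) := by
  classical
  obtain ⟨F, hF, hcover⟩ := h
  by_contra! hbad
  let G : ∀ i, Finset (E i) := fun i =>
    (F.filter fun z => z i ≠ 0).image fun z => ‖z i‖⁻¹ • z i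
  have hG : ∀ i, ∀ x ∈ G i, ‖x‖ = 1 := by
    intro i x hx
    obtain ⟨z, hz, rfl⟩ := Finset.mem_image.mp hx
    exact norm_smul_inv_norm (Finset.mem_filter.mp hz).2
  have hfar : ∀ i, ∃ y : E i, ‖y‖ ≤ 1 ∧ ∀ x ∈ G i, ε + δ < ‖y - x‖ := by
    intro i
    by_contra! hclose
    exact hbad i ⟨G i, hG i, hclose⟩
  choose y hy1 hyfar using hfar
  let Y : lp E ∞ := ⟨y, memℓp_infty ⟨1, by rintro _ ⟨i, rfl⟩; exact hy1 i⟩⟩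
  obtain ⟨z, hz, hYz⟩ := hcover Y (lp.norm_le_of_forall_le zero_le_one hy1)
  have hmax : max (1 - δ) 0 < ‖z‖ := by rw [hF z hz]; exact max_lt (by linarith) one_pos
  obtain ⟨_, ⟨i, rfl⟩, hzi, -⟩ := (lp.isLUB_norm z).exists_between hmax
  have hzi0 : z i ≠ 0 := norm_pos_iff.mp ((le_max_right _ _).trans_lt hzi)
  have hzi1 : ‖z i‖ ≤ 1 := (lp.norm_apply_le_norm ENNReal.top_ne_zero z i).trans (hF z hz).le
  have hmem : ‖z i‖⁻¹ • z i ∈ G i :=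
    Finset.mem_image_of_mem _ (Finset.mem_filter.mpr ⟨hz, hzi0⟩)
  have hYzi : ‖y i - z i‖ ≤ ε :=
    (lp.norm_apply_le_norm ENNReal.top_ne_zero (Y - z) i).trans hYz
  have hnormalize : ‖z i - ‖z i‖⁻¹ • z i‖ < δ := by
    rw [norm_sub_inv_norm_smul_self hzi0, abs_of_nonpos (by linarith)]
    linarith [le_max_left (1 - δ) 0]
  have := norm_sub_le_norm_sub_add_norm_sub (y i) (z i) (‖z i‖⁻¹ • z i)
  linarith [hyfar i _ hmem]

theorem thickness_lp_infty [Nonempty ι] [∀ i, NormedSpace ℝ (E i)] [∀ i, Nontrivial (E i)] :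
    thickness (lp E ∞) = ⨅ i, thickness (E i) := by
  have hbdd : BddBelow (Set.range fun i => thickness (E i)) :=
    ⟨0, by rintro _ ⟨i, rfl⟩; exact thickness_nonneg _⟩
  refine le_antisymm (le_ciInf fun i => le_thickness_s12 fun ε hε => thickness_le hε.lp_single) ?_
  refine le_thickness_s12 fun ε hε => le_of_forall_pos_le_add fun δ hδ => ?_
  obtain ⟨i, hi⟩ := hε.exists_of_lp hδ
  exact (ciInf_le hbdd i).trans (thickness_le hi)

end lp

theorem thickness_lp_top_general
    (E : ℕ → Type*) [∀ n, NormedAddCommGroup (E n)] [∀ n, NormedSpace ℝ (E n)]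
    (hinf : ∀ n, ¬ FiniteDimensional ℝ (E n)) :
    thickness (lp E ⊤) = ⨅ n, thickness (E n) := by
  have (n : ℕ) : Nontrivial (E n) := by
    by_contra htriv
    have := not_nontrivial_iff_subsingleton.mp htriv
    exact hinf n inferInstance
  exact thickness_lp_infty

/-- `T(ℓ_∞(X_n)) = inf_n T(X_n)` for infinite-dimensional Banach spaces `X_n`. -/
theorem thickness_lp_top
    (E : ℕ → Type*) [∀ n, NormedAddCommGroup (E n)] [∀ n, NormedSpace ℝ (E n)]
    [∀ n, CompleteSpace (E n)] (hinf : ∀ n, ¬ FiniteDimensional ℝ (E n)) :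
    thickness (lp E ⊤) = ⨅ n, thickness (E n) :=
  thickness_lp_top_general E hinf
end

section
/- The thickness constant of Z = ℓ_1 ⊕_2 ℓ_1 equals √(2 + √2); in particular T(Z) < 2 while T(ℓ_1) = 2, so T(X ⊕_p Y) can be strictly less than min{T(X), T(Y)}. -/
open scoped ENNReal NNReal

/-- The real space `ℓ_1`. -/
noncomputable abbrev ellOne := lp (fun _ : ℕ => ℝ) 1

open Filter Topology WithLp

def HasSphereNet (X : Type*) [NormedAddCommGroup X] (ε : ℝ) : Prop :=
  ∃ F : Finset X, (∀ x ∈ F, ‖x‖ = 1) ∧ ∀ y : X, ‖y‖ ≤ 1 → ∃ x ∈ F, ‖y - x‖ ≤ ε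

section General

variable {X : Type*} [NormedAddCommGroup X]

theorem thickness_eq_of_isLeast {c : ℝ} (h : IsLeast {ε | 0 < ε ∧ HasSphereNet X ε} c) :
    thickness X = c :=
  h.csInf_eq

theorem hasSphereNet_two {e : X} (he : ‖e‖ = 1) : HasSphereNet X 2 :=
  ⟨{e}, by simpa using he, fun y hy =>
    ⟨e, Finset.mem_singleton_self e, by linarith [norm_sub_le y e]⟩⟩

end General

theorem add_one_sq_add_sq_le {p s : ℝ} (hp : 0 ≤ p) (hps : p ≤ s) (h : p ^ 2 + s ^ 2 ≤ 1) :
    (p + 1) ^ 2 + s ^ 2 ≤ 2 + √2 := by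
  have : 2 * p ≤ √2 := Real.le_sqrt_of_sq_le (by nlinarith)
  nlinarith

theorem two_mul_sq_add_two_mul_add_one_le {c p q : ℝ} (hc : 0 ≤ c) (hp : 0 ≤ p) (hq : 0 ≤ q)
    (hpq : p ^ 2 + q ^ 2 = 1) : 2 * c ^ 2 + 2 * c + 1 ≤ (c + p) ^ 2 + (c + q) ^ 2 := by
  have : 1 ≤ p + q := by nlinarith
  nlinarith

namespace WithLp

variable {X Y : Type*} [NormedAddCommGroup X] [NormedAddCommGroup Y]

theorem norm_sub_toLp_le {x : WithLp 2 (X × Y)} {e : X} {f : Y} {r : ℝ}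
    (h : (‖x.fst‖ + ‖e‖) ^ 2 + (‖x.snd‖ + ‖f‖) ^ 2 ≤ r ^ 2) (hr : 0 ≤ r) :
    ‖x - toLp 2 (e, f)‖ ≤ r := by
  rw [prod_norm_eq_of_L2]
  refine Real.sqrt_le_iff.2 ⟨hr, le_trans ?_ h⟩
  gcongr <;> exact norm_sub_le _ _

theorem hasSphereNet_prod {e : X} {f : Y} (he : ‖e‖ = 1) (hf : ‖f‖ = 1) :
    HasSphereNet (WithLp 2 (X × Y)) √(2 + √2) := by
  classical
  refine ⟨{toLp 2 (e, (0 : Y)), toLp 2 ((0 : X), f)}, ?_, fun y hy => ?_⟩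
  · simp [norm_toLp_fst, norm_toLp_snd, he, hf]
  have hy' : ‖y.fst‖ ^ 2 + ‖y.snd‖ ^ 2 ≤ 1 := by
    rw [← prod_norm_sq_eq_of_L2]; exact pow_le_one₀ (norm_nonneg y) hy
  have hr : (0 : ℝ) ≤ √(2 + √2) := Real.sqrt_nonneg _
  have hr2 : √(2 + √2) ^ 2 = 2 + √2 := Real.sq_sqrt (by positivity)
  rcases le_total ‖y.fst‖ ‖y.snd‖ with h | h
  · refine ⟨toLp 2 (e, 0), by simp, norm_sub_toLp_le ?_ hr⟩
    simpa [he, hr2] using add_one_sq_add_sq_le (norm_nonneg _) h hy'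
  · refine ⟨toLp 2 (0, f), by simp, norm_sub_toLp_le ?_ hr⟩
    simpa [hf, hr2, add_comm] using add_one_sq_add_sq_le (norm_nonneg _) h (by linarith)

theorem sqrt_le_norm_toLp_sub {x : WithLp 2 (X × Y)} (hx : ‖x‖ = 1) {u : X} {v : Y} {c : ℝ}
    (hc : 0 ≤ c) (hu : c + ‖x.fst‖ ≤ ‖u - x.fst‖) (hv : c + ‖x.snd‖ ≤ ‖v - x.snd‖) :
    √(2 * c ^ 2 + 2 * c + 1) ≤ ‖toLp 2 (u, v) - x‖ := by
  have hpq : ‖x.fst‖ ^ 2 + ‖x.snd‖ ^ 2 = 1 := by rw [← prod_norm_sq_eq_of_L2, hx, one_pow]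
  rw [prod_norm_eq_of_L2]
  refine Real.sqrt_le_sqrt ((two_mul_sq_add_two_mul_add_one_le hc (norm_nonneg _)
    (norm_nonneg _) hpq).trans ?_)
  gcongr
  exacts [hu, hv]

end WithLp

namespace lp

variable {ι : Type*} {E : ι → Type*} [∀ i, NormedAddCommGroup (E i)]

theorem norm_eq_norm_apply_add_norm_sub_single [DecidableEq ι] (f : lp E 1) (i : ι) :
    ‖f‖ = ‖f i‖ + ‖f - lp.single 1 i (f i)‖ := by
  have h := lp.norm_sub_norm_compl_sub_single (by norm_num) f {i}
  simp only [ENNReal.toReal_one, Real.rpow_one, Finset.sum_singleton] at h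
  linarith

theorem norm_add_norm_sub_two_mul_le_norm_single_sub [DecidableEq ι] (f : lp E 1) (i : ι)
    (a : E i) : ‖a‖ + ‖f‖ - 2 * ‖f i‖ ≤ ‖lp.single 1 i a - f‖ := by
  have hg := norm_eq_norm_apply_add_norm_sub_single (lp.single 1 i a - f) i
  have hi : (lp.single 1 i a - f) i = a - f i := by
    rw [coeFn_sub, Pi.sub_apply, lp.single_apply_self]
  have hcompl : lp.single 1 i a - f - lp.single 1 i (a - f i) = -(f - lp.single 1 i (f i)) := by
    rw [lp.single_sub]
    abel
  rw [hi, hcompl, norm_neg] at hg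
  linarith [norm_eq_norm_apply_add_norm_sub_single f i, norm_sub_norm_le a (f i)]

theorem exists_forall_norm_apply_lt [Infinite ι] (F : Finset (lp E 1)) {δ : ℝ} (hδ : 0 < δ) :
    ∃ i, ∀ f ∈ F, ‖f i‖ < δ := by
  have h : ∀ᶠ i in cofinite, ∀ f ∈ F, ‖f i‖ < δ := by
    refine (Finset.eventually_all F).2 fun f _ => ?_
    have hs := (lp.memℓp f).summable (by norm_num : (0 : ℝ) < (1 : ℝ≥0∞).toReal)
    simp only [ENNReal.toReal_one, Real.rpow_one] at hs
    exact hs.tendsto_cofinite_zero.eventually_lt_const hδ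
  exact h.exists

theorem exists_forall_add_norm_le_norm_single_sub {V : Type*} [NormedAddCommGroup V]
    [Infinite ι] [DecidableEq ι] (F : Finset (lp (fun _ : ι => V) 1)) {a : V} {c : ℝ}
    (hc : c < ‖a‖) : ∃ i, ∀ f ∈ F, c + ‖f‖ ≤ ‖lp.single 1 i a - f‖ := by
  obtain ⟨i, hi⟩ := exists_forall_norm_apply_lt F (half_pos (sub_pos.2 hc))
  exact ⟨i, fun f hf => by
    linarith [hi f hf, norm_add_norm_sub_two_mul_le_norm_single_sub f i a]⟩

end lp

section LowerBounds

variable {ι κ E F : Type*} [Infinite ι] [Infinite κ] [NormedAddCommGroup E]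
  [NormedAddCommGroup F]

theorem two_le_of_hasSphereNet_lp_one {e : E} (he : ‖e‖ = 1) {ε : ℝ}
    (h : HasSphereNet (lp (fun _ : ι => E) 1) ε) : 2 ≤ ε := by
  classical
  obtain ⟨S, hS, hcov⟩ := h
  refine le_of_forall_lt_imp_le_of_dense fun t ht => ?_
  obtain ⟨i, hi⟩ := lp.exists_forall_add_norm_le_norm_single_sub S (a := e) (c := t - 1)
    (by linarith)
  obtain ⟨f, hf, hdist⟩ := hcov (lp.single 1 i e) (by rw [lp.norm_single one_pos, he])
  linarith [hi f hf, hS f hf]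

theorem sqrt_two_add_sqrt_two_le_of_hasSphereNet [NormedSpace ℝ E] [NormedSpace ℝ F]
    {e : E} {f : F} (he : ‖e‖ = 1) (hf : ‖f‖ = 1) {ε : ℝ}
    (h : HasSphereNet (WithLp 2 (lp (fun _ : ι => E) 1 × lp (fun _ : κ => F) 1)) ε) :
    √(2 + √2) ≤ ε := by
  classical
  obtain ⟨S, hS, hcov⟩ := h
  set a : ℝ := √2 / 2 with ha
  have ha0 : 0 ≤ a := by positivity
  have ha2 : a ^ 2 = 1 / 2 := by rw [ha, div_pow, Real.sq_sqrt zero_le_two]; norm_num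
  have hae : ‖a • e‖ = a := by rw [norm_smul, he, mul_one, Real.norm_of_nonneg ha0]
  have haf : ‖a • f‖ = a := by rw [norm_smul, hf, mul_one, Real.norm_of_nonneg ha0]
  have key : ∀ c ∈ Set.Ico 0 a, √(2 * c ^ 2 + 2 * c + 1) ≤ ε := by
    rintro c ⟨hc0, hca⟩
    obtain ⟨i, hi⟩ := lp.exists_forall_add_norm_le_norm_single_sub (S.image (·.fst))
      (hae.symm ▸ hca)
    obtain ⟨j, hj⟩ := lp.exists_forall_add_norm_le_norm_single_sub (S.image (·.snd))
      (haf.symm ▸ hca)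
    have hy : ‖toLp 2 ((lp.single 1 i (a • e) : lp (fun _ : ι => E) 1),
        (lp.single 1 j (a • f) : lp (fun _ : κ => F) 1))‖ = 1 := by
      rw [prod_norm_eq_of_L2, toLp_fst, toLp_snd, lp.norm_single one_pos,
        lp.norm_single one_pos, hae, haf, ha2]
      norm_num
    obtain ⟨x, hx, hdist⟩ := hcov _ hy.le
    exact (WithLp.sqrt_le_norm_toLp_sub (hS x hx) hc0 (hi _ (Finset.mem_image_of_mem _ hx))
      (hj _ (Finset.mem_image_of_mem _ hx))).trans hdist
  have hlim : Tendsto (fun c : ℝ => √(2 * c ^ 2 + 2 * c + 1)) (𝓝[<] a) (𝓝 √(2 + √2)) := by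
    have : 2 * a ^ 2 + 2 * a + 1 = 2 + √2 := by rw [ha2, ha]; ring
    rw [← this]
    exact (Continuous.tendsto (by fun_prop) a).mono_left nhdsWithin_le_nhds
  exact le_of_tendsto hlim (mem_of_superset (Ico_mem_nhdsLT (by positivity)) key)

end LowerBounds

section Thickness

variable {ι κ E F : Type*} [Infinite ι] [Infinite κ] [NormedAddCommGroup E] [NormedSpace ℝ E]
  [Nontrivial E] [NormedAddCommGroup F] [NormedSpace ℝ F] [Nontrivial F]

theorem thickness_lp_one : thickness (lp (fun _ : ι => E) 1) = 2 := by
  classical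
  obtain ⟨e, he⟩ := exists_norm_eq E zero_le_one
  obtain ⟨i⟩ := ‹Infinite ι›.nonempty
  exact thickness_eq_of_isLeast ⟨⟨two_pos, hasSphereNet_two (e := lp.single 1 i e)
    (by rw [lp.norm_single one_pos, he])⟩, fun _ hε => two_le_of_hasSphereNet_lp_one he hε.2⟩

theorem thickness_withLp_prod_lp_one :
    thickness (WithLp 2 (lp (fun _ : ι => E) 1 × lp (fun _ : κ => F) 1)) = √(2 + √2) := by
  classical
  obtain ⟨e, he⟩ := exists_norm_eq E zero_le_one
  obtain ⟨f, hf⟩ := exists_norm_eq F zero_le_one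
  obtain ⟨i⟩ := ‹Infinite ι›.nonempty
  obtain ⟨j⟩ := ‹Infinite κ›.nonempty
  refine thickness_eq_of_isLeast ⟨⟨by positivity, WithLp.hasSphereNet_prod
    (e := lp.single 1 i e) (f := lp.single 1 j f) ?_ ?_⟩,
    fun _ hε => sqrt_two_add_sqrt_two_le_of_hasSphereNet he hf hε.2⟩
  all_goals rwa [lp.norm_single one_pos]

end Thickness

/-- `T(ℓ_1 ⊕_2 ℓ_1) = √(2 + √2) < 2`, while `T(ℓ_1) = 2`, so the thickness of a
product can fall strictly below the minimum of the thicknesses of the factors. -/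
theorem thickness_l1_sum2_l1 :
    thickness (WithLp 2 (ellOne × ellOne)) = Real.sqrt (2 + Real.sqrt 2) ∧
    thickness (WithLp 2 (ellOne × ellOne)) < 2 ∧
    thickness ellOne = 2 := by
  have hZ : thickness (WithLp 2 (ellOne × ellOne)) = √(2 + √2) := thickness_withLp_prod_lp_one
  refine ⟨hZ, ?_, thickness_lp_one⟩
  rw [hZ, Real.sqrt_lt' two_pos]
  nlinarith [Real.sq_sqrt zero_le_two, Real.sqrt_nonneg 2]
end

section
/- For real numbers a, b ≥ 0 with a² + b² = 1 and z = (x, y) ∈ ℓ_1 ⊕_2 ℓ_1 with ‖x‖_1 = a, ‖y‖_1 = b, the four points z_1=(e_1,0), z_2=(−e_1,0), z_3=(0,e_1), z_4=(0,−e_1) satisfy min_{i} ‖z − z_i‖² ≤ 2 + a + b ≤ 2 + √2. -/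
open scoped ENNReal

/-- The first coordinate vector of `ℓ_1`. -/
noncomputable def e₁ : ellOne := lp.single 1 0 (1 : ℝ)

/-!
By the triangle inequality, `‖z - (e₁, 0)‖² ≤ (a + 1)² + b² = 2 + 2a` and
`‖z - (0, e₁)‖² ≤ a² + (b + 1)² = 2 + 2b`; the smaller of the two is at most their mean
`2 + a + b`. Finally `(a + b)² ≤ 2 (a² + b²) = 2`.
-/

lemma norm_e₁ : ‖e₁‖ = 1 := by
  simp [e₁, lp.norm_single]

namespace WithLp

variable {E F : Type*} [SeminormedAddCommGroup E] [SeminormedAddCommGroup F]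

lemma prod_norm_sub_toLp_sq (z : WithLp 2 (E × F)) (u : E) (v : F) :
    ‖z - toLp 2 (u, v)‖ ^ 2 = ‖z.fst - u‖ ^ 2 + ‖z.snd - v‖ ^ 2 := by
  rw [prod_norm_sq_eq_of_L2]; rfl

end WithLp

lemma min_le_add_div_two {α : Type*} [Field α] [LinearOrder α] [IsStrictOrderedRing α]
    (a b : α) : min a b ≤ (a + b) / 2 := by
  linarith [min_add_max a b, min_le_max (a := a) (b := b)]

lemma norm_sub_sq_add_sq_le {E F : Type*} [SeminormedAddGroup E] [SeminormedAddGroup F]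
    {u : E} (hu : ‖u‖ = 1) (x : E) {y : F} (h : ‖x‖ ^ 2 + ‖y‖ ^ 2 = 1) :
    ‖x - u‖ ^ 2 + ‖y‖ ^ 2 ≤ 2 + 2 * ‖x‖ := by
  have := pow_le_pow_left₀ (norm_nonneg _) (norm_sub_le x u) 2
  rw [hu] at this
  linarith

theorem min_dist_sq_le_two_add_general
    (a b : ℝ) (hab : a ^ 2 + b ^ 2 = 1)
    (z : WithLp 2 (ellOne × ellOne))
    (hx : ‖(WithLp.equiv 2 (ellOne × ellOne) z).1‖ = a)
    (hy : ‖(WithLp.equiv 2 (ellOne × ellOne) z).2‖ = b) :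
    min
      (min (‖z - (WithLp.equiv 2 (ellOne × ellOne)).symm (e₁, 0)‖ ^ 2)
           (‖z - (WithLp.equiv 2 (ellOne × ellOne)).symm (-e₁, 0)‖ ^ 2))
      (min (‖z - (WithLp.equiv 2 (ellOne × ellOne)).symm (0, e₁)‖ ^ 2)
           (‖z - (WithLp.equiv 2 (ellOne × ellOne)).symm (0, -e₁)‖ ^ 2))
      ≤ 2 + a + b ∧ 2 + a + b ≤ 2 + Real.sqrt 2 := by
  simp only [WithLp.equiv_apply, WithLp.equiv_symm_apply, WithLp.ofLp_fst, WithLp.ofLp_snd] at *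
  subst hx hy
  have near_e₁_left : ‖z - WithLp.toLp 2 (e₁, 0)‖ ^ 2 ≤ 2 + 2 * ‖z.fst‖ := by
    rw [WithLp.prod_norm_sub_toLp_sq, sub_zero]
    exact norm_sub_sq_add_sq_le norm_e₁ z.fst hab
  have near_e₁_right : ‖z - WithLp.toLp 2 (0, e₁)‖ ^ 2 ≤ 2 + 2 * ‖z.snd‖ := by
    rw [WithLp.prod_norm_sub_toLp_sq, sub_zero, add_comm]
    exact norm_sub_sq_add_sq_le norm_e₁ z.snd (by rwa [add_comm])
  constructor
  · calc _ ≤ min (‖z - WithLp.toLp 2 (e₁, 0)‖ ^ 2) (‖z - WithLp.toLp 2 (0, e₁)‖ ^ 2) :=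
          min_le_min (min_le_left _ _) (min_le_left _ _)
      _ ≤ _ := min_le_add_div_two _ _
      _ ≤ _ := by linarith
  · have : (‖z.fst‖ + ‖z.snd‖) ^ 2 ≤ 2 := by linarith [add_sq_le (a := ‖z.fst‖) (b := ‖z.snd‖)]
    linarith [Real.abs_le_sqrt this, le_abs_self (‖z.fst‖ + ‖z.snd‖)]

/-- for `z = (x,y) ∈ ℓ_1 ⊕_2 ℓ_1` with `‖x‖_1 = a`, `‖y‖_1 = b`,
`a² + b² = 1`, the four points `(±e₁,0)`, `(0,±e₁)` satisfy
`min_i ‖z − z_i‖² ≤ 2 + a + b ≤ 2 + √2`. -/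
theorem min_dist_sq_le_two_add
    (a b : ℝ) (ha : 0 ≤ a) (hb : 0 ≤ b) (hab : a ^ 2 + b ^ 2 = 1)
    (z : WithLp 2 (ellOne × ellOne))
    (hx : ‖(WithLp.equiv 2 (ellOne × ellOne) z).1‖ = a)
    (hy : ‖(WithLp.equiv 2 (ellOne × ellOne) z).2‖ = b) :
    min
      (min (‖z - (WithLp.equiv 2 (ellOne × ellOne)).symm (e₁, 0)‖ ^ 2)
           (‖z - (WithLp.equiv 2 (ellOne × ellOne)).symm (-e₁, 0)‖ ^ 2))
      (min (‖z - (WithLp.equiv 2 (ellOne × ellOne)).symm (0, e₁)‖ ^ 2)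
           (‖z - (WithLp.equiv 2 (ellOne × ellOne)).symm (0, -e₁)‖ ^ 2))
      ≤ 2 + a + b ∧ 2 + a + b ≤ 2 + Real.sqrt 2 :=
  min_dist_sq_le_two_add_general a b hab z hx hy
end

section
/- For 1 ≤ p < ∞, the space X = ℝ ⊕_1 ℓ_p has thickness constant T(X) = 2^{1/p}, even though X is not uniformly nonsquare. -/
open scoped ENNReal NNReal

/-!
Write `q = p.toReal` and `e n` for the `n`-th unit vector of `ℓ_p`. For `w ∈ ℓ_p`, splitting off
the `i`-th coordinate gives `‖c • e i - w‖ ^ q = |c - w i| ^ q + (‖w‖ ^ q - |w i| ^ q)`.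

Upper bound: a point `(t, w)` of the unit ball is within `η + 2 ^ (1 / q)` of the unit vector
`(a, ±(1 - |a|) e 0)`, where `a` is an `η`-approximation of `t` from a finite net of `[-1, 1]` and
the sign is that of `w 0`: the two scalars at coordinate `0` then differ by at most `1`, so the
`ℓ_p`-part of the distance is at most `(1 + 1) ^ (1 / q)`.

Lower bound: since `w i → 0`, the distance from `(0, e n)` to a unit vector `(a, w)` tends to
`|a| + (1 + ‖w‖ ^ q) ^ (1 / q) ≥ 1 - b + (1 + b) 2 ^ (1 / q - 1) ≥ 2 ^ (1 / q)` with `b = ‖w‖`,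
by the power mean inequality. So finitely many unit vectors at distance `< 2 ^ (1 / q)` from
the whole unit ball cannot exist.

The unit vectors `(1, 0)` and `(0, e 0)` have `‖x - y‖ = ‖x + y‖ = 2`.
-/

open Filter Topology Metric Set WithLp

namespace lp

variable {α : Type*} {p : ℝ≥0∞}

theorem norm_single_sub_rpow [DecidableEq α] {E : α → Type*} [∀ i, NormedAddCommGroup (E i)]
    (hp : 0 < p.toReal) (f : lp E p) (i : α) (c : E i) :
    ‖lp.single p i c - f‖ ^ p.toReal
      = ‖c - f i‖ ^ p.toReal + (‖f‖ ^ p.toReal - ‖f i‖ ^ p.toReal) := by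
  have hf := lp.norm_sub_norm_compl_sub_single hp f {i}
  have hg := lp.norm_sub_norm_compl_sub_single hp (lp.single p i c - f) {i}
  have hcompl : lp.single p i c - f - lp.single p i (c - f i) = -(f - lp.single p i (f i)) := by
    rw [lp.single_sub]; abel
  simp only [Finset.sum_singleton, lp.coeFn_sub, Pi.sub_apply, lp.single_apply_self, hcompl,
    norm_neg] at hf hg
  linarith

theorem tendsto_norm_apply_cofinite {E : α → Type*} [∀ i, NormedAddCommGroup (E i)]
    (hp : 0 < p.toReal) (f : lp E p) : Tendsto (fun i ↦ ‖f i‖) cofinite (𝓝 0) := by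
  have h := (((lp.memℓp f).summable hp).tendsto_cofinite_zero).rpow_const
    (p := p.toReal⁻¹) (Or.inr (inv_nonneg.2 hp.le))
  simpa [Real.rpow_rpow_inv (norm_nonneg _) hp.ne', Real.zero_rpow (inv_ne_zero hp.ne')] using h

theorem tendsto_norm_single_sub [DecidableEq α] {E : Type*} [NormedAddCommGroup E]
    (hp : 0 < p.toReal) (f : lp (fun _ : α ↦ E) p) (c : E) :
    Tendsto (fun i ↦ ‖(lp.single p i c : lp (fun _ : α ↦ E) p) - f‖) cofinite
      (𝓝 ((‖c‖ ^ p.toReal + ‖f‖ ^ p.toReal) ^ (1 / p.toReal))) := by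
  have hf : Tendsto (fun i ↦ f i) cofinite (𝓝 0) :=
    tendsto_zero_iff_norm_tendsto_zero.2 (tendsto_norm_apply_cofinite hp f)
  have hlim := ((((tendsto_const_nhds (x := c)).sub hf).norm.rpow_const (Or.inr hp.le)).add
    ((tendsto_const_nhds (x := ‖f‖ ^ p.toReal)).sub (hf.norm.rpow_const (Or.inr hp.le)))).rpow_const
    (p := 1 / p.toReal) (Or.inr (by positivity))
  refine Tendsto.congr (fun i ↦ ?_) (by simpa [Real.zero_rpow hp.ne'] using hlim)
  rw [← one_div, ← norm_single_sub_rpow hp (E := fun _ ↦ E), one_div]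
  exact Real.rpow_rpow_inv (lp.norm_nonneg' _) hp.ne'

theorem norm_single_sub_le [DecidableEq α] [Fact (1 ≤ p)] (hp : p ≠ ⊤)
    {f : lp (fun _ : α ↦ ℝ) p} (hf : ‖f‖ ≤ 1) (i : α) {v : ℝ} (hv : |v| ≤ 1)
    (hvf : 0 ≤ v * f i) : ‖lp.single p i v - f‖ ≤ 2 ^ (1 / p.toReal) := by
  have hp₀ : p ≠ 0 := (zero_lt_one.trans_le Fact.out).ne'
  have hq : 0 < p.toReal := ENNReal.toReal_pos hp₀ hp
  have hfi : |f i| ≤ 1 := (lp.norm_apply_le_norm hp₀ f i).trans hf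
  -- `v` and `f i` have the same sign, so they are at distance at most `1`
  have hvfi : |v - f i| ≤ 1 := by
    rw [abs_le] at hv hfi ⊢
    constructor <;> rcases le_total 0 v with h | h <;> rcases le_total 0 (f i) with h' | h' <;>
      nlinarith
  have hpow : ‖lp.single p i v - f‖ ^ p.toReal ≤ 2 := by
    rw [norm_single_sub_rpow hq, Real.norm_eq_abs, Real.norm_eq_abs]
    have h₁ : |v - f i| ^ p.toReal ≤ 1 := Real.rpow_le_one (abs_nonneg _) hvfi hq.le
    have h₂ : ‖f‖ ^ p.toReal ≤ 1 := Real.rpow_le_one (norm_nonneg _) hf hq.le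
    have h₃ : 0 ≤ |f i| ^ p.toReal := by positivity
    linarith
  rwa [one_div, Real.le_rpow_inv_iff_of_pos (norm_nonneg _) zero_le_two hq]

end lp

theorem two_rpow_le_one_sub_add_rpow {q b : ℝ} (hq : 1 ≤ q) (hb₀ : 0 ≤ b) (hb₁ : b ≤ 1) :
    (2 : ℝ) ^ (1 / q) ≤ 1 - b + (1 + b ^ q) ^ (1 / q) := by
  have hq₀ : 0 < q := zero_lt_one.trans_le hq
  have hconv : ((1 + b) / 2) ^ q ≤ (1 + b ^ q) / 2 := by
    have h := (convexOn_rpow hq).2 (mem_Ici.2 zero_le_one) (mem_Ici.2 hb₀)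
      (by norm_num : (0 : ℝ) ≤ 1 / 2) (by norm_num : (0 : ℝ) ≤ 1 / 2) (by norm_num)
    simp only [smul_eq_mul, Real.one_rpow] at h
    calc ((1 + b) / 2) ^ q = (1 / 2 * 1 + 1 / 2 * b) ^ q := by ring_nf
      _ ≤ 1 / 2 * 1 + 1 / 2 * b ^ q := h
      _ = (1 + b ^ q) / 2 := by ring
  have hmean : (1 + b) / 2 ≤ ((1 + b ^ q) / 2) ^ (1 / q) := by
    rwa [one_div, Real.le_rpow_inv_iff_of_pos (by positivity) (by positivity) hq₀]
  rw [Real.div_rpow (by positivity) zero_le_two] at hmean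
  have htwo : (2 : ℝ) ^ (1 / q) ≤ 2 := by
    simpa using Real.rpow_le_rpow_of_exponent_le one_le_two (div_le_one_of_le₀ hq hq₀.le)
  have htwo₀ : (0 : ℝ) < 2 ^ (1 / q) := by positivity
  rw [le_div_iff₀ htwo₀] at hmean
  nlinarith

section RealSumLp

variable {p : ℝ≥0∞} [Fact (1 ≤ p)]

theorem exists_unit_cover_of_two_rpow_lt (hp : p ≠ ⊤) {ε : ℝ} (hε : 2 ^ (1 / p.toReal) < ε) :
    ∃ F : Finset (WithLp 1 (ℝ × lp (fun _ : ℕ ↦ ℝ) p)), (∀ x ∈ F, ‖x‖ = 1) ∧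
      ∀ y : WithLp 1 (ℝ × lp (fun _ : ℕ ↦ ℝ) p), ‖y‖ ≤ 1 → ∃ x ∈ F, ‖y - x‖ ≤ ε := by
  classical
  have hp₀ : 0 < p := zero_lt_one.trans_le Fact.out
  obtain ⟨A, hA, hAcover⟩ := (isCompact_Icc (a := (-1 : ℝ)) (b := 1)).elim_nhds_subcover
    (fun a ↦ ball a (ε - 2 ^ (1 / p.toReal))) (fun a _ ↦ ball_mem_nhds a (sub_pos.2 hε))
  let center : ℝ × ℝ → WithLp 1 (ℝ × lp (fun _ : ℕ ↦ ℝ) p) :=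
    fun as ↦ toLp 1 (as.1, lp.single p 0 (as.2 * (1 - |as.1|)))
  refine ⟨(A ×ˢ {1, -1}).image center, ?_, ?_⟩
  · simp only [Finset.mem_image, Finset.mem_product, Finset.mem_insert, Finset.mem_singleton]
    rintro _ ⟨⟨a, s⟩, ⟨ha, hs⟩, rfl⟩
    have ha₁ : |a| ≤ 1 := abs_le.2 (hA a ha)
    have hs₁ : |s| = 1 := by rcases hs with rfl | rfl <;> simp
    simp only [center, prod_norm_eq_of_L1, toLp_fst, toLp_snd, lp.norm_single hp₀,
      Real.norm_eq_abs, abs_mul, hs₁, abs_of_nonneg (sub_nonneg.2 ha₁)]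
    ring
  · intro y hy
    rw [prod_norm_eq_of_L1] at hy
    have hy₁ : y.fst ∈ Icc (-1) 1 :=
      abs_le.1 (by linarith [norm_nonneg y.snd, Real.norm_eq_abs y.fst])
    obtain ⟨a, haA, hya⟩ := mem_iUnion₂.1 (hAcover hy₁)
    have ha₁ : |a| ≤ 1 := abs_le.2 (hA a haA)
    set s : ℝ := if 0 ≤ y.snd 0 then 1 else -1 with hs
    have hsign : 0 ≤ s * (1 - |a|) * y.snd 0 := by
      rw [hs]; split_ifs with h <;> nlinarith
    have hs₁ : |s| = 1 := by rw [hs]; split_ifs <;> simp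
    have hv : |s * (1 - |a|)| ≤ 1 := by
      rw [abs_mul, hs₁, one_mul, abs_of_nonneg (sub_nonneg.2 ha₁)]
      linarith [abs_nonneg a]
    refine ⟨center (a, s), Finset.mem_image_of_mem _ (Finset.mem_product.2 ⟨haA, ?_⟩), ?_⟩
    · rw [hs]; split_ifs <;> simp
    have h₁ : ‖y.fst - a‖ < ε - 2 ^ (1 / p.toReal) := mem_ball.1 hya
    have h₂ := lp.norm_single_sub_le hp (by linarith [norm_nonneg y.fst]) 0 hv hsign
    rw [prod_norm_eq_of_L1, sub_fst, sub_snd, norm_sub_rev y.snd]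
    simp only [center, toLp_fst, toLp_snd]
    linarith

theorem two_rpow_le_of_unit_cover (hp : p ≠ ⊤) {ε : ℝ}
    (F : Finset (WithLp 1 (ℝ × lp (fun _ : ℕ ↦ ℝ) p))) (hF : ∀ x ∈ F, ‖x‖ = 1)
    (hcover : ∀ y : WithLp 1 (ℝ × lp (fun _ : ℕ ↦ ℝ) p), ‖y‖ ≤ 1 → ∃ x ∈ F, ‖y - x‖ ≤ ε) :
    2 ^ (1 / p.toReal) ≤ ε := by
  have hp₀ : 0 < p := zero_lt_one.trans_le Fact.out
  have hq₁ : 1 ≤ p.toReal := by simpa using ENNReal.toReal_mono hp (Fact.out : 1 ≤ p)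
  by_contra! hε
  let e : ℕ → WithLp 1 (ℝ × lp (fun _ : ℕ ↦ ℝ) p) := fun n ↦ toLp 1 (0, lp.single p n 1)
  have hfar : ∀ z ∈ F, ∀ᶠ n in cofinite, ε < ‖e n - z‖ := by
    intro z hz
    have hz₁ := hF z hz
    rw [prod_norm_eq_of_L1] at hz₁
    have hlim : Tendsto (fun n ↦ ‖e n - z‖) cofinite
        (𝓝 (‖z.fst‖ + (1 + ‖z.snd‖ ^ p.toReal) ^ (1 / p.toReal))) := by
      simpa [e, prod_norm_eq_of_L1, sub_fst, sub_snd] using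
        (lp.tendsto_norm_single_sub (by positivity) z.snd 1).const_add ‖z.fst‖
    refine hlim.eventually_const_lt ?_
    calc ε < 2 ^ (1 / p.toReal) := hε
      _ ≤ 1 - ‖z.snd‖ + (1 + ‖z.snd‖ ^ p.toReal) ^ (1 / p.toReal) :=
        two_rpow_le_one_sub_add_rpow hq₁ (norm_nonneg _) (by linarith [norm_nonneg z.fst])
      _ = _ := by rw [← hz₁]; ring
  obtain ⟨n, hn⟩ := ((Finset.eventually_all F).2 hfar).exists
  obtain ⟨z, hz, hle⟩ := hcover (e n) (by simp [e, lp.norm_single hp₀])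
  exact (hle.trans_lt (hn z hz)).false

theorem exists_norm_sub_eq_two_norm_add_eq_two :
    ∃ x y : WithLp 1 (ℝ × lp (fun _ : ℕ ↦ ℝ) p),
      ‖x‖ = 1 ∧ ‖y‖ = 1 ∧ ‖x - y‖ = 2 ∧ ‖x + y‖ = 2 := by
  have hp₀ : 0 < p := zero_lt_one.trans_le Fact.out
  refine ⟨toLp 1 (1, 0), toLp 1 (0, lp.single p 0 1), ?_, ?_, ?_, ?_⟩ <;>
    simp [prod_norm_eq_of_L1, sub_fst, sub_snd, add_fst, add_snd, lp.norm_single hp₀] <;> norm_num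

end RealSumLp

/-- `T(ℝ ⊕_1 ℓ_p) = 2^{1/p}` for `1 ≤ p < ∞`, even though this space is not
uniformly nonsquare. -/
theorem thickness_real_sum1_lp
    (p : ℝ≥0∞) [Fact (1 ≤ p)] (hp : p ≠ ⊤) :
    thickness (WithLp 1 (ℝ × lp (fun _ : ℕ => ℝ) p)) = 2 ^ (1 / p.toReal) ∧
    ∀ δ : ℝ, δ < 2 → ∃ x y : WithLp 1 (ℝ × lp (fun _ : ℕ => ℝ) p),
      ‖x‖ = 1 ∧ ‖y‖ = 1 ∧ δ < min ‖x - y‖ ‖x + y‖ := by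
  refine ⟨csInf_eq_of_forall_ge_of_forall_gt_exists_lt ?_ ?_ ?_, fun δ hδ ↦ ?_⟩
  · exact ⟨_, by positivity, exists_unit_cover_of_two_rpow_lt hp (lt_add_one _)⟩
  · rintro ε ⟨-, F, hF, hcover⟩
    exact two_rpow_le_of_unit_cover hp F hF hcover
  · intro w hw
    obtain ⟨ε, hε, hεw⟩ := exists_between hw
    exact ⟨ε, ⟨(by positivity : (0 : ℝ) < 2 ^ (1 / p.toReal)).trans hε,
      exists_unit_cover_of_two_rpow_lt hp hε⟩, hεw⟩
  · obtain ⟨x, y, hx, hy, hsub, hadd⟩ := exists_norm_sub_eq_two_norm_add_eq_two (p := p)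
    exact ⟨x, y, hx, hy, by rwa [hsub, hadd, min_self]⟩
end
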